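/- arXiv:2309.06136 — 6 statements merged into one kernel-verified Lean document; each statement's English description precedes it below -/
import Mathlib

section
/- Splitting lemma for epimorphisms: let Q be the linearly oriented A_n quiver and f: M → N an epimorphism of F1-representations with N = N₁ ⊕ N₂ where N₁ ≅ [k,l]. Then there exist subrepresentations M₁, M₂ of M with M = M₁ ⊕ M₂, M₁ ≅ [i₀,l] for some i₀ ≤ k, f(M₁) ⊆ N₁, f(M₂) ⊆ N₂, f|_{M₁} is the unique nonzero morphism [i₀,l] → [k,l], and f|_{M₂}: M₂ → N₂ is an epimorphism. -/
noncomputable section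
open Function
attribute [local instance] Classical.propDecidable

/-- An `F1`-vector space: a finite pointed set. -/
structure F1Mod where
  carrier : Type
  z : carrier
  [fin : Fintype carrier]

attribute [instance] F1Mod.fin

/-- The dimension of an `F1`-vector space: cardinality minus one. -/
def F1Mod.dim (V : F1Mod) : ℕ := Fintype.card V.carrier - 1

/-- An `F1`-linear map: basepoint preserving, injective outside the preimage
of the basepoint. -/
structure F1Hom (V W : F1Mod) where
  f : V.carrier → W.carrier
  map_z : f V.z = W.z
  inj : ∀ a b : V.carrier, f a = f b → f a ≠ W.z → a = b

/-- Wedge sum (direct sum) of two `F1`-vector spaces. -/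
def F1Mod.sum (V W : F1Mod) : F1Mod where
  carrier := {p : V.carrier × W.carrier // p.1 = V.z ∨ p.2 = W.z}
  z := ⟨(V.z, W.z), Or.inl rfl⟩

namespace F1Hom

def idH (V : F1Mod) : F1Hom V V := ⟨fun x => x, rfl, fun _ _ h _ => h⟩

/-- Direct sum of `F1`-linear maps. -/
def sum {V V' W W' : F1Mod} (φ : F1Hom V W) (ψ : F1Hom V' W') :
    F1Hom (V.sum V') (W.sum W') where
  f x := ⟨(φ.f x.1.1, ψ.f x.1.2), by
    rcases x.2 with h | h
    · exact Or.inl (by rw [h, φ.map_z])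
    · exact Or.inr (by rw [h, ψ.map_z])⟩
  map_z := by
    apply Subtype.ext
    show (φ.f V.z, ψ.f V'.z) = (W.z, W'.z)
    rw [φ.map_z, ψ.map_z]
  inj := by
    intro a b hab hnz
    have hval := congrArg Subtype.val hab
    have h1 : φ.f a.1.1 = φ.f b.1.1 := congrArg Prod.fst hval
    have h2 : ψ.f a.1.2 = ψ.f b.1.2 := congrArg Prod.snd hval
    apply Subtype.ext
    by_cases hc : φ.f a.1.1 = W.z
    · have hc2 : ψ.f a.1.2 ≠ W'.z := by
        intro h
        apply hnz
        apply Subtype.ext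
        show (φ.f a.1.1, ψ.f a.1.2) = (W.z, W'.z)
        rw [hc, h]
      have e2 : a.1.2 = b.1.2 := ψ.inj _ _ h2 hc2
      have na : a.1.2 ≠ V'.z := fun h => hc2 (by rw [h, ψ.map_z])
      have ha1 : a.1.1 = V.z := a.2.resolve_right na
      have hb1 : b.1.1 = V.z := b.2.resolve_right (e2 ▸ na)
      exact Prod.ext_iff.mpr ⟨ha1.trans hb1.symm, e2⟩
    · have e1 : a.1.1 = b.1.1 := φ.inj _ _ h1 hc
      have na : a.1.1 ≠ V.z := fun h => hc (by rw [h, φ.map_z])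
      have ha2 : a.1.2 = V'.z := a.2.resolve_left na
      have hb2 : b.1.2 = V'.z := b.2.resolve_left (e1 ▸ na)
      exact Prod.ext_iff.mpr ⟨e1, ha2.trans hb2.symm⟩

/-- Inclusion of the first summand. -/
def inl (V W : F1Mod) : F1Hom V (V.sum W) where
  f x := ⟨(x, W.z), Or.inr rfl⟩
  map_z := rfl
  inj := fun _ _ hab _ => congrArg (fun t => t.1.1) hab

/-- Inclusion of the second summand. -/
def inr (V W : F1Mod) : F1Hom W (V.sum W) where
  f x := ⟨(V.z, x), Or.inl rfl⟩
  map_z := rfl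
  inj := fun _ _ hab _ => congrArg (fun t => t.1.2) hab

/-- Projection onto the first summand. -/
def pr1 (V W : F1Mod) : F1Hom (V.sum W) V where
  f x := x.1.1
  map_z := rfl
  inj := by
    intro a b hab hnz
    apply Subtype.ext
    have ha : a.1.2 = W.z := a.2.resolve_left hnz
    have hb : b.1.2 = W.z := b.2.resolve_left (fun h => hnz (hab.trans h))
    exact Prod.ext_iff.mpr ⟨hab, ha.trans hb.symm⟩

/-- Projection onto the second summand. -/
def pr2 (V W : F1Mod) : F1Hom (V.sum W) W where
  f x := x.1.2
  map_z := rfl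
  inj := by
    intro a b hab hnz
    apply Subtype.ext
    have ha : a.1.1 = V.z := a.2.resolve_right hnz
    have hb : b.1.1 = V.z := b.2.resolve_right (fun h => hnz (hab.trans h))
    exact Prod.ext_iff.mpr ⟨ha.trans hb.symm, hab⟩

/-- The dual of an `F1`-linear map: sends a nonzero element of the image to
its unique preimage, and everything else to the basepoint. -/
def dual {V W : F1Mod} (φ : F1Hom V W) : W.carrier → V.carrier :=
  fun w => if h : ∃ a, φ.f a = w ∧ w ≠ W.z then h.choose else V.z

end F1Hom
/-! ## Representations of the linearly oriented `A_n` quiver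
`n → n-1 → ⋯ → 2 → 1` over `F1`.  Vertices are indexed by `1,…,n`; the
index `0` and the indices `> n` carry the zero space.  The map `φ i`
corresponds to the arrow `i+1 → i`. -/

structure QRep (n : ℕ) where
  M : ℕ → F1Mod
  φ : ∀ i : ℕ, F1Hom (M (i + 1)) (M i)
  supp : ∀ i, (i = 0 ∨ n < i) → ∀ x : (M i).carrier, x = (M i).z

structure QRepHom {n : ℕ} (A B : QRep n) where
  f : ∀ i, F1Hom (A.M i) (B.M i)
  comm : ∀ i x, (f i).f ((A.φ i).f x) = (B.φ i).f ((f (i + 1)).f x)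

namespace QRepHom

/-- Epimorphisms are the vertex-wise surjective morphisms. -/
def Epi {n : ℕ} {A B : QRep n} (h : QRepHom A B) : Prop := ∀ i, Surjective (h.f i).f

/-- Monomorphisms are the vertex-wise injective morphisms. -/
def Mono {n : ℕ} {A B : QRep n} (h : QRepHom A B) : Prop := ∀ i, Injective (h.f i).f

def idH {n : ℕ} (A : QRep n) : QRepHom A A := ⟨fun i => F1Hom.idH (A.M i), fun _ _ => rfl⟩

def zeroH {n : ℕ} (A B : QRep n) : QRepHom A B where
  f i := ⟨fun _ => (B.M i).z, rfl, fun _ _ _ h => absurd rfl h⟩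
  comm := fun i _ => ((B.φ i).map_z).symm

end QRepHom

/-- A morphism of representations which is vertex-wise bijective. -/
def IsRepIso {n : ℕ} {A B : QRep n} (h : QRepHom A B) : Prop := ∀ i, Bijective (h.f i).f

/-- Two representations are isomorphic. -/
def RepIsoEx {n : ℕ} (A B : QRep n) : Prop := ∃ h : QRepHom A B, IsRepIso h

/-- The zero representation. -/
def QRep.zeroRep (n : ℕ) : QRep n where
  M _ := { carrier := PUnit, z := PUnit.unit }
  φ _ := ⟨fun _ => PUnit.unit, rfl, fun a b _ _ => Subsingleton.elim a b⟩
  supp := fun _ _ x => Subsingleton.elim x _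

/-- The interval (indecomposable) representation `[k,l]`, with the
one-dimensional space at the vertices `k ≤ i ≤ l` and zero elsewhere, and
identity structure maps inside the interval. -/
def interval (n k l : ℕ) : QRep n where
  M i := { carrier := {b : Bool // b = true → 1 ≤ k ∧ k ≤ i ∧ i ≤ l ∧ l ≤ n}
           z := ⟨false, by simp⟩ }
  φ i := { f := fun x => ⟨x.1 && decide (k ≤ i), fun hx => by
              rw [Bool.and_eq_true] at hx
              have h2 := x.2 hx.1
              exact ⟨h2.1, of_decide_eq_true hx.2, Nat.le_of_succ_le h2.2.2.1, h2.2.2.2⟩⟩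
           map_z := Subtype.ext (Bool.false_and (decide (k ≤ i)))
           inj := by
             intro a b hab hnz
             have hval : (a.1 && decide (k ≤ i)) = (b.1 && decide (k ≤ i)) :=
               congrArg Subtype.val hab
             have ha' : (a.1 && decide (k ≤ i)) = true := by
               cases h : (a.1 && decide (k ≤ i))
               · exact absurd (Subtype.ext h) hnz
               · rfl
             have hb' : (b.1 && decide (k ≤ i)) = true := by rw [← hval]; exact ha'
             apply Subtype.ext
             rw [((Bool.and_eq_true _ _).mp ha').1, ((Bool.and_eq_true _ _).mp hb').1] }
  supp := by
    intro i hi x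
    apply Subtype.ext
    show x.1 = false
    cases hxx : x.1
    · rfl
    · have h := x.2 hxx
      rcases hi with hi | hi <;> omega

/-- Direct sum (vertex-wise wedge sum) of representations. -/
def QRep.sum {n : ℕ} (A B : QRep n) : QRep n where
  M i := (A.M i).sum (B.M i)
  φ i := F1Hom.sum (A.φ i) (B.φ i)
  supp := by
    intro i hi x
    apply Subtype.ext
    have h1 := A.supp i hi x.1.1
    have h2 := B.supp i hi x.1.2
    exact Prod.ext_iff.mpr ⟨h1, h2⟩

/-- The inclusion of the first summand of a direct sum. -/
def QRep.inlH {n : ℕ} (A B : QRep n) : QRepHom A (A.sum B) where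
  f i := F1Hom.inl (A.M i) (B.M i)
  comm := by
    intro i x
    apply Subtype.ext
    show ((A.φ i).f x, (B.M i).z) = ((A.φ i).f x, (B.φ i).f (B.M (i + 1)).z)
    rw [(B.φ i).map_z]

/-- The inclusion of the second summand of a direct sum. -/
def QRep.inrH {n : ℕ} (A B : QRep n) : QRepHom B (A.sum B) where
  f i := F1Hom.inr (A.M i) (B.M i)
  comm := by
    intro i x
    apply Subtype.ext
    show ((A.M i).z, (B.φ i).f x) = ((A.φ i).f (A.M (i + 1)).z, (B.φ i).f x)
    rw [(A.φ i).map_z]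

/-- The projection onto the first summand of a direct sum. -/
def QRep.pr1H {n : ℕ} (A B : QRep n) : QRepHom (A.sum B) A where
  f i := F1Hom.pr1 (A.M i) (B.M i)
  comm := fun _ _ => rfl

/-- The projection onto the second summand of a direct sum. -/
def QRep.pr2H {n : ℕ} (A B : QRep n) : QRepHom (A.sum B) B where
  f i := F1Hom.pr2 (A.M i) (B.M i)
  comm := fun _ _ => rfl

/-- A subrepresentation: a pointed subset at each vertex, closed under the
structure maps. -/
structure QSubrep {n : ℕ} (R : QRep n) where
  S : ∀ i, Set ((R.M i).carrier)
  zmem : ∀ i, (R.M i).z ∈ S i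
  closed : ∀ i x, x ∈ S (i + 1) → (R.φ i).f x ∈ S i

namespace QSubrep

/-- The representation carried by a subrepresentation. -/
def toRep {n : ℕ} {R : QRep n} (T : QSubrep R) : QRep n where
  M i := { carrier := {x // x ∈ T.S i}, z := ⟨(R.M i).z, T.zmem i⟩ }
  φ i := { f := fun x => ⟨(R.φ i).f x.1, T.closed i x.1 x.2⟩
           map_z := Subtype.ext (R.φ i).map_z
           inj := by
             intro a b hab hnz
             apply Subtype.ext
             exact (R.φ i).inj a.1 b.1 (congrArg Subtype.val hab)
               (fun h => hnz (Subtype.ext h)) }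
  supp := fun i hi x => Subtype.ext (R.supp i hi x.1)

/-- The quotient of a representation by a subrepresentation: the subset is
collapsed to the basepoint. -/
def quot {n : ℕ} {R : QRep n} (T : QSubrep R) : QRep n where
  M i := { carrier := {x : (R.M i).carrier // x ∈ T.S i → x = (R.M i).z}
           z := ⟨(R.M i).z, fun _ => rfl⟩ }
  φ i := { f := fun x => ⟨if (R.φ i).f x.1 ∈ T.S i then (R.M i).z else (R.φ i).f x.1, by
             intro hm
             by_cases h : (R.φ i).f x.1 ∈ T.S i
             · rw [if_pos h]
             · rw [if_neg h] at hm
               exact absurd hm h⟩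
           map_z := by
             apply Subtype.ext
             show (if (R.φ i).f (R.M (i + 1)).z ∈ T.S i then (R.M i).z
                 else (R.φ i).f (R.M (i + 1)).z) = (R.M i).z
             rw [if_pos (by rw [(R.φ i).map_z]; exact T.zmem i)]
           inj := by
             intro a b hab hnz
             have hv : (if (R.φ i).f a.1 ∈ T.S i then (R.M i).z else (R.φ i).f a.1)
                 = (if (R.φ i).f b.1 ∈ T.S i then (R.M i).z else (R.φ i).f b.1) :=
               congrArg Subtype.val hab
             have hz : ¬(if (R.φ i).f a.1 ∈ T.S i then (R.M i).z else (R.φ i).f a.1)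
                 = (R.M i).z := fun h => hnz (Subtype.ext h)
             by_cases ha : (R.φ i).f a.1 ∈ T.S i
             · rw [if_pos ha] at hz
               exact absurd rfl hz
             · rw [if_neg ha] at hv hz
               by_cases hb : (R.φ i).f b.1 ∈ T.S i
               · rw [if_pos hb] at hv
                 exact absurd hv hz
               · rw [if_neg hb] at hv
                 exact Subtype.ext ((R.φ i).inj a.1 b.1 hv
                   (fun h => ha (by rw [h]; exact T.zmem i))) }
  supp := fun i hi x => Subtype.ext (R.supp i hi x.1)

end QSubrep

/-- A representation is semisimple iff all its structure maps are zero,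
equivalently it is a direct sum of simple representations. -/
def QRep.Semisimple {n : ℕ} (R : QRep n) : Prop :=
  ∀ i x, (R.φ i).f x = (R.M i).z

/-- A subrepresentation is semisimple if the representation it carries is. -/
def QSubrep.Semisimple {n : ℕ} {R : QRep n} (T : QSubrep R) : Prop :=
  ∀ i x, x ∈ T.S (i + 1) → (R.φ i).f x = (R.M i).z

/-- The radical: the subrepresentation generated by the images of the
structure maps. -/
def QRep.radical {n : ℕ} (R : QRep n) : QSubrep R where
  S i := {x | x = (R.M i).z ∨ ∃ y, (R.φ i).f y = x}
  zmem i := Or.inl rfl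
  closed i x _ := Or.inr ⟨x, rfl⟩

/-- A representation is zero iff each vertex carries only the basepoint. -/
def QRep.IsZero {n : ℕ} (R : QRep n) : Prop := ∀ i (x : (R.M i).carrier), x = (R.M i).z

/-- Indecomposable: nonzero, and in any direct sum decomposition one of the
summands is zero. -/
def QRep.Indec {n : ℕ} (R : QRep n) : Prop :=
  ¬R.IsZero ∧ ∀ A B : QRep n, RepIsoEx R (A.sum B) → A.IsZero ∨ B.IsZero

/-- A projective representation: morphisms to the target of an epimorphism
lift along it. -/
def QRep.Projective {n : ℕ} (P : QRep n) : Prop :=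
  ∀ (A B : QRep n) (f : QRepHom A B), f.Epi → ∀ g : QRepHom P B,
    ∃ h : QRepHom P A, ∀ i x, (f.f i).f ((h.f i).f x) = (g.f i).f x

/-- The chain generated by an element `x0` at vertex `l`: the orbit of `x0`
under the structure maps. -/
inductive Gen {n : ℕ} (M : QRep n) (l : ℕ) (x0 : (M.M l).carrier) :
    ∀ i : ℕ, (M.M i).carrier → Prop
  | base : Gen M l x0 l x0
  | step (i : ℕ) (v : (M.M (i+1)).carrier) :
      Gen M l x0 (i+1) v → Gen M l x0 i ((M.φ i).f v)

lemma Gen.le_l {n : ℕ} {M : QRep n} {l : ℕ} {x0 : (M.M l).carrier} {i : ℕ}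
    {v : (M.M i).carrier} (h : Gen M l x0 i v) : i ≤ l := by
  induction h with
  | base => exact le_refl _
  | step i v h ih => omega

lemma Gen.uniq {n : ℕ} {M : QRep n} {l : ℕ} {x0 : (M.M l).carrier} {i : ℕ}
    {v : (M.M i).carrier} (h : Gen M l x0 i v) :
    ∀ v', Gen M l x0 i v' → v = v' := by
  induction h with
  | base =>
    intro v' h'
    cases h' with
    | base => rfl
    | step _ u hu => exact absurd hu.le_l (by omega)
  | step i v h ih =>
    intro v' h'
    cases h' with
    | base => exact absurd h.le_l (by omega)
    | step _ u hu => rw [ih u hu]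

lemma Gen.exists_of_le {n : ℕ} (M : QRep n) (l : ℕ) (x0 : (M.M l).carrier) :
    ∀ d i, i + d = l → ∃ v, Gen M l x0 i v := by
  intro d
  induction d with
  | zero =>
    intro i h
    have hi : i = l := by omega
    subst hi
    exact ⟨x0, Gen.base⟩
  | succ d ih =>
    intro i h
    obtain ⟨u, hu⟩ := ih (i+1) (by omega)
    exact ⟨_, Gen.step i u hu⟩

/-- Splitting lemma for epimorphisms. If `f : M → N` is an
epimorphism and `N = N₁ ⊕ N₂` with `N₁ ≅ [k,l]`, then `M = M₁ ⊕ M₂` with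
`M₁ ≅ [i₀,l]` for some `i₀ ≤ k`, `f(M₁) ⊆ N₁`, `f(M₂) ⊆ N₂`, `f|M₁` is the
(unique) nonzero morphism `[i₀,l] → [k,l]` and `f|M₂ : M₂ → N₂` is an
epimorphism. -/
theorem splitting_lemma_epi (n k l : ℕ) (hk : 1 ≤ k) (hkl : k ≤ l) (hl : l ≤ n)
    (M N : QRep n) (f : QRepHom M N) (hf : f.Epi)
    (N1 N2 : QSubrep N)
    (hcover : ∀ i x, x ∈ N1.S i ∨ x ∈ N2.S i)
    (hdisj : ∀ i x, x ∈ N1.S i → x ∈ N2.S i → x = (N.M i).z)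
    (hN1 : RepIsoEx N1.toRep (interval n k l)) :
    ∃ M1 M2 : QSubrep M,
      (∀ i x, x ∈ M1.S i ∨ x ∈ M2.S i) ∧
      (∀ i x, x ∈ M1.S i → x ∈ M2.S i → x = (M.M i).z) ∧
      (∃ i0, 1 ≤ i0 ∧ i0 ≤ k ∧ RepIsoEx M1.toRep (interval n i0 l)) ∧
      (∀ i x, x ∈ M1.S i → (f.f i).f x ∈ N1.S i) ∧
      (∀ i x, x ∈ M2.S i → (f.f i).f x ∈ N2.S i) ∧
      (∃ i x, x ∈ M1.S i ∧ (f.f i).f x ≠ (N.M i).z) ∧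
      (∀ i y, y ∈ N2.S i → ∃ x, x ∈ M2.S i ∧ (f.f i).f x = y) := by 
  classical
  obtain ⟨g, hg⟩ := hN1
  -- the distinguished nonzero elements of `N1`
  have hwex : ∀ i : ℕ, ∃ u : (N1.toRep.M i).carrier, (g.f i).f u =
      ⟨decide (k ≤ i ∧ i ≤ l), fun h => by
        have h' := of_decide_eq_true h; exact ⟨hk, h'.1, h'.2, hl⟩⟩ :=
    fun i => (hg i).2 _
  choose w hw using hwex
  have wval : ∀ i, ((g.f i).f (w i)).1 = decide (k ≤ i ∧ i ≤ l) :=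
    fun i => congrArg Subtype.val (hw i)
  have wne : ∀ i, k ≤ i → i ≤ l → (w i).1 ≠ (N.M i).z := by
    intro i hki hil hzz
    have hz1 : w i = (N1.toRep.M i).z := Subtype.ext hzz
    have h2 := wval i
    rw [hz1, (g.f i).map_z] at h2
    rw [decide_eq_true (⟨hki, hil⟩ : k ≤ i ∧ i ≤ l)] at h2
    exact Bool.false_ne_true h2
  have huniq : ∀ i (y : (N.M i).carrier) (hy : y ∈ N1.S i), y ≠ (N.M i).z →
      k ≤ i ∧ i ≤ l ∧ y = (w i).1 := by
    intro i y hy hyne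
    have hune : (⟨y, hy⟩ : (N1.toRep.M i).carrier) ≠ (N1.toRep.M i).z :=
      fun h => hyne (congrArg Subtype.val h)
    have hgune : (g.f i).f ⟨y, hy⟩ ≠ ((interval n k l).M i).z := by
      intro h
      exact hune ((hg i).1 (h.trans ((g.f i).map_z).symm))
    have hval : ((g.f i).f ⟨y, hy⟩).1 = true := by
      cases hb : ((g.f i).f ⟨y, hy⟩).1 with
      | false => exact absurd (Subtype.ext hb) hgune
      | true => rfl
    have hcon := ((g.f i).f ⟨y, hy⟩).2 hval
    have heq : (g.f i).f ⟨y, hy⟩ = (g.f i).f (w i) := by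
      rw [hw i]
      apply Subtype.ext
      rw [hval]
      exact (decide_eq_true ⟨hcon.2.1, hcon.2.2.1⟩).symm
    have h2 := (hg i).1 heq
    exact ⟨hcon.2.1, hcon.2.2.1, congrArg Subtype.val h2⟩
  have hwstep : ∀ i, k ≤ i → i + 1 ≤ l → (N.φ i).f (w (i+1)).1 = (w i).1 := by
    intro i hki hil
    have hc := g.comm i (w (i+1))
    have hval : ((g.f i).f ((N1.toRep.φ i).f (w (i+1)))).1 = ((g.f i).f (w i)).1 := by
      rw [hc, wval i]
      show (((g.f (i+1)).f (w (i+1))).1 && decide (k ≤ i)) = decide (k ≤ i ∧ i ≤ l)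
      rw [wval (i+1)]
      rw [decide_eq_true (⟨by omega, hil⟩ : k ≤ i + 1 ∧ i + 1 ≤ l),
        decide_eq_true hki, decide_eq_true (⟨hki, by omega⟩ : k ≤ i ∧ i ≤ l)]
      rfl
    exact congrArg Subtype.val ((hg i).1 (Subtype.ext hval))
  -- lift the chain to `M`
  obtain ⟨xl, hfxl⟩ := hf l ((w l).1)
  have hex : ∀ i, ∃ v : (M.M i).carrier, i ≤ l → Gen M l xl i v := by
    intro i
    by_cases hi : i ≤ l
    · obtain ⟨v, hv⟩ := Gen.exists_of_le M l xl (l - i) i (by omega)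
      exact ⟨v, fun _ => hv⟩
    · exact ⟨(M.M i).z, fun h => absurd h hi⟩
  choose x hGx using hex
  have hxeq : ∀ i (v : (M.M i).carrier), Gen M l xl i v → v = x i :=
    fun i v h => h.uniq _ (hGx i h.le_l)
  have hxl' : xl = x l := hxeq l xl Gen.base
  have hstep : ∀ i, i < l → x i = (M.φ i).f (x (i+1)) := by
    intro i hi
    exact (hxeq i _ (Gen.step i (x (i+1)) (hGx (i+1) hi))).symm
  have hfx : ∀ i (v : (M.M i).carrier), Gen M l xl i v → (f.f i).f v ∈ N1.S i := by
    intro i v h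
    induction h with
    | base => rw [hfxl]; exact (w l).2
    | step i v h ih => rw [f.comm i v]; exact N1.closed i _ ih
  have hfw : ∀ d i, i + d = l → k ≤ i → (f.f i).f (x i) = (w i).1 := by
    intro d
    induction d with
    | zero =>
      intro i hil hki
      have hi : i = l := by omega
      subst hi
      rw [← hxl']
      exact hfxl
    | succ d ih =>
      intro i hil hki
      rw [hstep i (by omega), f.comm i, ih (i+1) (by omega) (by omega),
        hwstep i hki (by omega)]
  -- the start of the lifted interval
  have hxk : x k ≠ (M.M k).z := by
    intro h
    have h2 := hfw (l - k) k (by omega) (le_refl k)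
    rw [h, (f.f k).map_z] at h2
    exact wne k (le_refl k) hkl h2.symm
  have hpex : ∃ i, x i ≠ (M.M i).z := ⟨k, hxk⟩
  set i0 := Nat.find hpex with hi0def
  have hi0k : i0 ≤ k := Nat.find_min' hpex hxk
  have hi0spec : x i0 ≠ (M.M i0).z := Nat.find_spec hpex
  have hdown : ∀ i, i < i0 → x i = (M.M i).z :=
    fun i hi => not_not.mp (Nat.find_min hpex hi)
  have hi01 : 1 ≤ i0 := by
    have h0 : x 0 = (M.M 0).z := M.supp 0 (Or.inl rfl) (x 0)
    rcases Nat.eq_zero_or_pos i0 with h | h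
    · exact absurd h0 (h ▸ hi0spec)
    · exact h
  have hup : ∀ i, i0 ≤ i → i ≤ l → x i ≠ (M.M i).z := by
    intro i hi
    induction i, hi using Nat.le_induction with
    | base => exact fun _ => hi0spec
    | succ i hi ih =>
      intro hil hzz
      have h2 := hstep i (by omega)
      rw [hzz, (M.φ i).map_z] at h2
      exact ih (by omega) h2
  -- membership characterization for M1
  have hmem1 : ∀ i (v : (M.M i).carrier), (v = (M.M i).z ∨ Gen M l xl i v) →
      v = (M.M i).z ∨ (v = x i ∧ i0 ≤ i ∧ i ≤ l) := by
    intro i v h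
    rcases h with h | h
    · exact Or.inl h
    · by_cases hz : v = (M.M i).z
      · exact Or.inl hz
      · right
        have hil := h.le_l
        have hveq := hxeq i v h
        refine ⟨hveq, ?_, hil⟩
        by_contra hlt
        push_neg at hlt
        exact hz (hveq.trans (hdown i hlt))
  refine ⟨⟨fun i => {v | v = (M.M i).z ∨ Gen M l xl i v}, fun i => Or.inl rfl, ?_⟩,
      ⟨fun i => {v | v = (M.M i).z ∨
        ((f.f i).f v ∈ N2.S i ∧ ¬(v = (M.M i).z ∨ Gen M l xl i v))},
       fun i => Or.inl rfl, ?_⟩, ?_, ?_, ?_, ?_, ?_, ?_, ?_⟩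
  · -- M1 closed
    intro i v hv
    rcases hv with h | h
    · left; rw [h, (M.φ i).map_z]
    · right; exact Gen.step i v h
  · -- M2 closed
    intro i v hv
    rcases hv with h | ⟨h2, h1⟩
    · left; rw [h, (M.φ i).map_z]
    · by_cases hz : (M.φ i).f v = (M.M i).z
      · exact Or.inl hz
      right
      refine ⟨by rw [f.comm i v]; exact N2.closed i _ h2, ?_⟩
      intro hmem
      rcases hmem with h | hgen
      · exact hz h
      · have hil : i ≤ l := hgen.le_l
        rcases lt_or_eq_of_le hil with hlt | heq
        · have e1 : (M.φ i).f v = x i := hxeq i _ hgen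
          have e2 : x i = (M.φ i).f (x (i+1)) := hstep i hlt
          have e3 := (M.φ i).inj v (x (i+1)) (e1.trans e2) hz
          exact h1 (Or.inr (by rw [e3]; exact hGx (i+1) hlt))
        · have e1 : (M.φ i).f v = x i := hxeq i _ hgen
          have hN1m : (f.f i).f ((M.φ i).f v) ∈ N1.S i := hfx i _ hgen
          have hN2m : (f.f i).f ((M.φ i).f v) ∈ N2.S i := by
            rw [f.comm i v]; exact N2.closed i _ h2
          have hzz := hdisj i _ hN1m hN2m
          rw [e1, hfw (l - i) i (by omega) (by omega)] at hzz
          exact wne i (by omega) hil hzz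
  · -- covering
    intro i v
    by_cases h1 : v = (M.M i).z ∨ Gen M l xl i v
    · exact Or.inl h1
    · right
      rcases hcover i ((f.f i).f v) with hn1 | hn2
      · by_cases hfz : (f.f i).f v = (N.M i).z
        · exact Or.inr ⟨hfz ▸ N2.zmem i, h1⟩
        · obtain ⟨hki, hil, heqw⟩ := huniq i _ hn1 hfz
          exfalso
          have e1 : (f.f i).f v = (f.f i).f (x i) := by
            rw [heqw, hfw (l - i) i (by omega) hki]
          have e2 := (f.f i).inj v (x i) e1 hfz
          exact h1 (Or.inr (by rw [e2]; exact hGx i hil))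
      · exact Or.inr ⟨hn2, h1⟩
  · -- disjointness
    intro i v h1 h2
    rcases h2 with h | ⟨_, hn1⟩
    · exact h
    · exact absurd h1 hn1
  · -- the interval isomorphism
    refine ⟨i0, hi01, hi0k, ?_⟩
    refine ⟨⟨fun i => ⟨fun v => ⟨decide (v.1 ≠ (M.M i).z), fun hb => ?_⟩, ?_, ?_⟩, ?_⟩, ?_⟩
    · -- the boolean constraint
      have hv := of_decide_eq_true hb
      rcases hmem1 i v.1 v.2 with h | ⟨hxe, h1, h2⟩
      · exact absurd h hv
      · exact ⟨hi01, h1, h2, hl⟩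
    · -- map_z
      apply Subtype.ext
      show decide (((M.M i).z : (M.M i).carrier) ≠ (M.M i).z) = false
      exact decide_eq_false (not_not_intro rfl)
    · -- inj
      intro a b hab hnz
      have hv : decide (a.1 ≠ (M.M i).z) = decide (b.1 ≠ (M.M i).z) :=
        congrArg Subtype.val hab
      have htrue : decide (a.1 ≠ (M.M i).z) = true := by
        cases h : decide (a.1 ≠ (M.M i).z) with
        | false => exact absurd (Subtype.ext h) hnz
        | true => rfl
      have hane : a.1 ≠ (M.M i).z := of_decide_eq_true htrue
      have hbne : b.1 ≠ (M.M i).z := of_decide_eq_true (hv ▸ htrue)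
      rcases hmem1 i a.1 a.2 with h | ⟨hxa, _, _⟩
      · exact absurd h hane
      rcases hmem1 i b.1 b.2 with h | ⟨hxb, _, _⟩
      · exact absurd h hbne
      exact Subtype.ext (hxa.trans hxb.symm)
    · -- comm
      intro i v
      apply Subtype.ext
      show decide ((M.φ i).f v.1 ≠ (M.M i).z)
        = (decide (v.1 ≠ (M.M (i+1)).z) && decide (i0 ≤ i))
      by_cases hz : v.1 = (M.M (i+1)).z
      · rw [hz, (M.φ i).map_z, decide_eq_false (not_not_intro rfl),
          decide_eq_false (not_not_intro rfl), Bool.false_and]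
      · rw [decide_eq_true hz]
        rcases hmem1 (i+1) v.1 v.2 with h | ⟨hxe, h1, h2⟩
        · exact absurd h hz
        · have hphi : (M.φ i).f v.1 = x i := by rw [hxe, ← hstep i h2]
          rw [hphi, Bool.true_and]
          exact decide_eq_decide.mpr
            ⟨fun h => le_of_not_gt (fun hlt => h (hdown i hlt)),
             fun h => hup i h (by omega)⟩
    · -- bijectivity
      intro i
      constructor
      · intro a b hab
        have hv : decide (a.1 ≠ (M.M i).z) = decide (b.1 ≠ (M.M i).z) :=
          congrArg Subtype.val hab
        by_cases ha : a.1 = (M.M i).z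
        · rw [decide_eq_false (not_not_intro ha)] at hv
          have hb := of_decide_eq_false hv.symm
          exact Subtype.ext (by rw [ha, not_not.mp hb])
        · have hbne : b.1 ≠ (M.M i).z :=
            of_decide_eq_true (by rw [← hv]; exact decide_eq_true ha)
          rcases hmem1 i a.1 a.2 with h | ⟨hxa, _, _⟩
          · exact absurd h ha
          rcases hmem1 i b.1 b.2 with h | ⟨hxb, _, _⟩
          · exact absurd h hbne
          exact Subtype.ext (hxa.trans hxb.symm)
      · intro c
        by_cases hc : c.1 = true
        · have hcc := c.2 hc
          refine ⟨⟨x i, Or.inr (hGx i hcc.2.2.1)⟩, ?_⟩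
          apply Subtype.ext
          show decide (x i ≠ (M.M i).z) = c.1
          rw [hc]
          exact decide_eq_true (hup i hcc.2.1 hcc.2.2.1)
        · have hcc : c.1 = false := Bool.eq_false_iff.mpr hc
          refine ⟨⟨(M.M i).z, Or.inl rfl⟩, ?_⟩
          apply Subtype.ext
          show decide (((M.M i).z : (M.M i).carrier) ≠ (M.M i).z) = c.1
          rw [hcc]
          exact decide_eq_false (not_not_intro rfl)
  · -- f(M1) ⊆ N1
    intro i v hv
    rcases hv with h | h
    · rw [h, (f.f i).map_z]; exact N1.zmem i
    · exact hfx i v h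
  · -- f(M2) ⊆ N2
    intro i v hv
    rcases hv with h | ⟨h2, _⟩
    · rw [h, (f.f i).map_z]; exact N2.zmem i
    · exact h2
  · -- nonzero on M1
    refine ⟨l, x l, Or.inr (hGx l (le_refl l)), ?_⟩
    rw [hfw 0 l rfl hkl]
    exact wne l hkl (le_refl l)
  · -- epi onto N2
    intro i y hy
    by_cases hyz : y = (N.M i).z
    · exact ⟨(M.M i).z, Or.inl rfl, by rw [(f.f i).map_z, hyz]⟩
    · obtain ⟨m, hm⟩ := hf i y
      refine ⟨m, Or.inr ⟨hm ▸ hy, ?_⟩, hm⟩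
      intro hmem
      rcases hmem with h | hgen
      · exact hyz (by rw [← hm, h, (f.f i).map_z])
      · have hmN1 : (f.f i).f m ∈ N1.S i := hfx i m hgen
        exact hyz (hm ▸ hdisj i _ hmN1 (hm ▸ hy))
end
end

section
/- Let Q be the linearly oriented A_n quiver. An F1-representation P = (P_i, P_α) such that each structure map P_α is injective is a projective object in rep(Q, F1): for every epimorphism f: M → N and every morphism g: P → N there exists h: P → M with g = f ∘ h. -/
noncomputable section
open Function
attribute [local instance] Classical.propDecidable

section LiftAux

variable {n : ℕ} {P A B : QRep n} (f : QRepHom A B) (g : QRepHom P B)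
  (hf : f.Epi)

/-- The raw step function for building a lift at vertex `i`, given the lift
`next` at vertex `i+1`. -/
def stepF (i : ℕ) (next : F1Hom (P.M (i + 1)) (A.M (i + 1)))
    (p : (P.M i).carrier) : (A.M i).carrier :=
  if h : ∃ x, (P.φ i).f x = p ∧ p ≠ (P.M i).z then (A.φ i).f (next.f h.choose)
  else if (g.f i).f p = (B.M i).z then (A.M i).z
  else (hf i ((g.f i).f p)).choose

lemma stepF_compat (i : ℕ) (next : F1Hom (P.M (i + 1)) (A.M (i + 1)))
    (hnext : ∀ x, (f.f (i + 1)).f (next.f x) = (g.f (i + 1)).f x)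
    (p : (P.M i).carrier) :
    (f.f i).f (stepF f g hf i next p) = (g.f i).f p := by
  unfold stepF
  split_ifs with h1 h2
  · obtain ⟨hx, _⟩ := h1.choose_spec
    rw [f.comm, hnext, ← g.comm, hx]
  · rw [(f.f i).map_z, h2]
  · exact (hf i ((g.f i).f p)).choose_spec

lemma stepF_mapz (i : ℕ) (next : F1Hom (P.M (i + 1)) (A.M (i + 1))) :
    stepF f g hf i next (P.M i).z = (A.M i).z := by
  unfold stepF
  rw [dif_neg (by rintro ⟨x, -, h⟩; exact h rfl), if_pos (g.f i).map_z]

/-- The step of the lift, bundled as an `F1`-linear map. -/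
def stepH (i : ℕ) (next : F1Hom (P.M (i + 1)) (A.M (i + 1)))
    (hnext : ∀ x, (f.f (i + 1)).f (next.f x) = (g.f (i + 1)).f x) :
    F1Hom (P.M i) (A.M i) where
  f := stepF f g hf i next
  map_z := stepF_mapz f g hf i next
  inj := by
    intro a b hab hnz
    have ca := stepF_compat f g hf i next hnext a
    have cb := stepF_compat f g hf i next hnext b
    have gab : (g.f i).f a = (g.f i).f b := by rw [← ca, ← cb, hab]
    by_cases hga : (g.f i).f a = (B.M i).z
    · -- both must come from the image branch
      have hgb : (g.f i).f b = (B.M i).z := gab ▸ hga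
      have ha : ∃ x, (P.φ i).f x = a ∧ a ≠ (P.M i).z := by
        by_contra hc
        apply hnz
        unfold stepF
        rw [dif_neg hc, if_pos hga]
      have hb : ∃ x, (P.φ i).f x = b ∧ b ≠ (P.M i).z := by
        by_contra hc
        apply hnz
        rw [hab]
        unfold stepF
        rw [dif_neg hc, if_pos hgb]
      have ea : stepF f g hf i next a = (A.φ i).f (next.f ha.choose) := dif_pos ha
      have eb : stepF f g hf i next b = (A.φ i).f (next.f hb.choose) := dif_pos hb
      have hAnz : (A.φ i).f (next.f ha.choose) ≠ (A.M i).z := by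
        rw [← ea]; exact hnz
      have e1 : next.f ha.choose = next.f hb.choose :=
        (A.φ i).inj _ _ (by rw [← ea, ← eb, hab]) hAnz
      have hnnz : next.f ha.choose ≠ (A.M (i + 1)).z := by
        intro h
        exact hAnz (by rw [h, (A.φ i).map_z])
      have e2 : ha.choose = hb.choose := next.inj _ _ e1 hnnz
      rw [← ha.choose_spec.1, ← hb.choose_spec.1, e2]
    · exact (g.f i).inj a b gab hga

variable (hP : ∀ i, 1 ≤ i → i + 1 ≤ n → Injective ((P.φ i).f))

include hP in
lemma stepF_comm (i : ℕ) (next : F1Hom (P.M (i + 1)) (A.M (i + 1)))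
    (x : (P.M (i + 1)).carrier) :
    stepF f g hf i next ((P.φ i).f x) = (A.φ i).f (next.f x) := by
  by_cases hp : (P.φ i).f x = (P.M i).z
  · rw [hp, stepF_mapz]
    by_cases h0 : i = 0
    · subst h0
      exact (A.supp 0 (Or.inl rfl) ((A.φ 0).f (next.f x))).symm
    · have hx : x = (P.M (i + 1)).z := by
        by_cases hn : i + 1 ≤ n
        · exact hP i (Nat.one_le_iff_ne_zero.mpr h0) hn (by rw [hp, (P.φ i).map_z])
        · exact P.supp (i + 1) (Or.inr (by omega)) x
      rw [hx, next.map_z, (A.φ i).map_z]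
  · have himg : ∃ y, (P.φ i).f y = (P.φ i).f x ∧ (P.φ i).f x ≠ (P.M i).z :=
      ⟨x, rfl, hp⟩
    have e : stepF f g hf i next ((P.φ i).f x)
        = (A.φ i).f (next.f himg.choose) := dif_pos himg
    have hc := himg.choose_spec
    have : himg.choose = x := (P.φ i).inj _ _ hc.1 (by rw [hc.1]; exact hp)
    rw [e, this]

/-- The lift, built by downward recursion on the vertex. -/
def liftH (i : ℕ) :
    {h : F1Hom (P.M i) (A.M i) // ∀ x, (f.f i).f (h.f x) = (g.f i).f x} :=
  if hi : n < i then
    ⟨⟨fun _ => (A.M i).z, rfl, fun _ _ _ h => absurd rfl h⟩, by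
      intro x
      have hx : x = (P.M i).z := P.supp i (Or.inr hi) x
      rw [hx, (g.f i).map_z, (f.f i).map_z]⟩
  else
    ⟨stepH f g hf i (liftH (i + 1)).1 (liftH (i + 1)).2, by
      intro x
      exact stepF_compat f g hf i (liftH (i + 1)).1 (liftH (i + 1)).2 x⟩
termination_by n + 1 - i
decreasing_by omega

include hP in
lemma liftH_comm (i : ℕ) (x : (P.M (i + 1)).carrier) :
    ((liftH f g hf i).1).f ((P.φ i).f x)
      = (A.φ i).f (((liftH f g hf (i + 1)).1).f x) := by
  rw [liftH]
  split_ifs with hi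
  · show (A.M i).z = _
    have hx : x = (P.M (i + 1)).z := P.supp (i + 1) (Or.inr (by omega)) x
    rw [hx, ((liftH f g hf (i + 1)).1).map_z, (A.φ i).map_z]
  · exact stepF_comm f g hf hP i (liftH f g hf (i + 1)).1 x

end LiftAux

/-- A representation of the linearly oriented `A_n` quiver
all of whose structure maps (along genuine arrows `i+1 → i`, `1 ≤ i ≤ n-1`)
are injective is a projective object. -/
theorem projective_of_injective_maps (n : ℕ) (P : QRep n)
    (hP : ∀ i, 1 ≤ i → i + 1 ≤ n → Injective ((P.φ i).f)) :
    P.Projective := by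
  intro A B f hf g
  exact ⟨⟨fun i => (liftH f g hf i).1, liftH_comm f g hf hP⟩,
    fun i => (liftH f g hf i).2⟩
end
end

section
/- Let Q be the linearly oriented A_n quiver. An F1-representation M = (M_i, M_α) is projective in rep(Q, F1) if and only if M_α is injective for every arrow α. In particular, the interval representation [k,l] is projective if and only if k = 1. -/
noncomputable section
open Function
attribute [local instance] Classical.propDecidable

/-! ### Auxiliary material for the proof -/

namespace F1Hom

def comp {U V W : F1Mod} (ψ : F1Hom V W) (φ : F1Hom U V) : F1Hom U W where
  f := fun x => ψ.f (φ.f x)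
  map_z := by show ψ.f (φ.f U.z) = W.z; rw [φ.map_z, ψ.map_z]
  inj := by
    intro a b h hz
    have h' : ψ.f (φ.f a) = ψ.f (φ.f b) := h
    have hz' : ψ.f (φ.f a) ≠ W.z := hz
    have h1 : φ.f a = φ.f b := ψ.inj _ _ h' hz'
    exact φ.inj a b h1 (fun e => hz' (by rw [e, ψ.map_z]))

def zeroM (V W : F1Mod) : F1Hom V W := ⟨fun _ => W.z, rfl, fun _ _ _ h => absurd rfl h⟩

def ofEq {V W : F1Mod} (h : V = W) : F1Hom V W where
  f := fun x => h ▸ x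
  map_z := by subst h; rfl
  inj := by subst h; exact fun a b hab _ => hab

end F1Hom

def QRep.down {n : ℕ} (R : QRep n) : ∀ (j i : ℕ), F1Hom (R.M j) (R.M i)
  | 0, _ => F1Hom.zeroM _ _
  | j+1, i =>
    if h : i = j + 1 then F1Hom.ofEq (by rw [h])
    else if i ≤ j then F1Hom.comp (R.down j i) (R.φ j)
    else F1Hom.zeroM _ _

lemma QRep.ne_z_bounds {n : ℕ} (R : QRep n) {i : ℕ} {x : (R.M i).carrier}
    (hx : x ≠ (R.M i).z) : 1 ≤ i ∧ i ≤ n := by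
  by_contra h
  exact hx (R.supp i (by omega) x)

lemma QRep.down_self {n : ℕ} (R : QRep n) (i : ℕ) (x : (R.M i).carrier) :
    (R.down i i).f x = x := by
  cases i with
  | zero =>
    show (R.M 0).z = x
    exact (R.supp 0 (Or.inl rfl) x).symm
  | succ j =>
    simp only [QRep.down]
    rw [dif_pos trivial]
    rfl

lemma QRep.down_of_le {n : ℕ} (R : QRep n) {i j : ℕ} (h : i ≤ j)
    (x : (R.M (j+1)).carrier) :
    (R.down (j+1) i).f x = (R.down j i).f ((R.φ j).f x) := by
  simp only [QRep.down]
  rw [dif_neg (by omega), if_pos h]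
  rfl

lemma QRep.down_bot {n : ℕ} (R : QRep n) {i : ℕ} : ∀ {j : ℕ}, i + 1 ≤ j →
    ∀ x : (R.M j).carrier,
    (R.φ i).f ((R.down j (i+1)).f x) = (R.down j i).f x := by
  intro j
  induction j with
  | zero => omega
  | succ j ih =>
    intro hij x
    rcases Nat.lt_or_ge (i+1) (j+1) with hlt | hge
    · have h1 : i + 1 ≤ j := by omega
      rw [R.down_of_le h1, R.down_of_le (by omega : i ≤ j), ih h1]
    · have hji : i = j := by omega
      subst hji
      rw [R.down_self, R.down_of_le (le_refl i), R.down_self]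

lemma QRep.down_comp {n : ℕ} (R : QRep n) {i j : ℕ} : ∀ {k : ℕ}, i ≤ j → j ≤ k →
    ∀ x : (R.M k).carrier,
    (R.down j i).f ((R.down k j).f x) = (R.down k i).f x := by
  intro k
  induction k with
  | zero =>
    intro hij hjk x
    have hj : j = 0 := by omega
    have hi : i = 0 := by omega
    subst hj; subst hi
    simp only [R.down_self]
  | succ k ih =>
    intro hij hjk x
    rcases Nat.lt_or_ge j (k+1) with hlt | hge
    · have hjk' : j ≤ k := by omega
      rw [R.down_of_le hjk', ih hij hjk', ← R.down_of_le (le_trans hij hjk')]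
    · have hj : j = k + 1 := by omega
      subst hj
      rw [R.down_self]

lemma down_nat {n : ℕ} {A B : QRep n} (h : QRepHom A B) {i : ℕ} : ∀ {j : ℕ}, i ≤ j →
    ∀ x : (A.M j).carrier,
    (h.f i).f ((A.down j i).f x) = (B.down j i).f ((h.f j).f x) := by
  intro j
  induction j with
  | zero =>
    intro hij x
    have hi : i = 0 := by omega
    subst hi
    simp only [QRep.down_self]
  | succ j ih =>
    intro hij x
    rcases Nat.lt_or_ge i (j+1) with hlt | hge
    · have h1 : i ≤ j := by omega
      rw [A.down_of_le h1, ih h1, h.comm, ← B.down_of_le h1]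
    · have hi : i = j + 1 := by omega
      subst hi
      simp only [QRep.down_self]

/-! ### The lifting construction -/

lemma down_ne_z {n : ℕ} (P : QRep n)
    (hinj : ∀ i, 1 ≤ i → i + 1 ≤ n → Injective ((P.φ i).f)) :
    ∀ (d i j : ℕ), 1 ≤ i → i + d = j → ∀ x : (P.M j).carrier, x ≠ (P.M j).z →
      (P.down j i).f x ≠ (P.M i).z := by
  intro d
  induction d with
  | zero =>
    intro i j h1 hd x hx
    have hji : j = i := by omega
    subst hji
    rw [P.down_self]
    exact hx
  | succ d ih =>
    intro i j h1 hd x hx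
    have hij : i + 1 ≤ j := by omega
    have hne := ih (i+1) j (by omega) (by omega) x hx
    have hbound : i + 1 ≤ n := (P.ne_z_bounds hne).2
    rw [← P.down_bot hij]
    intro hcon
    exact hne (hinj i h1 hbound (hcon.trans (P.φ i).map_z.symm))

def Jmax {n : ℕ} (P : QRep n) (i : ℕ) (x : (P.M i).carrier) : ℕ :=
  Nat.findGreatest (fun j => ∃ y : (P.M j).carrier, (P.down j i).f y = x) n

def origAt {n : ℕ} (P : QRep n) (j i : ℕ) (x : (P.M i).carrier) : (P.M j).carrier :=
  if h : ∃ y : (P.M j).carrier, (P.down j i).f y = x then h.choose else (P.M j).z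

lemma Jmax_le {n : ℕ} (P : QRep n) (i : ℕ) (x : (P.M i).carrier) : Jmax P i x ≤ n :=
  Nat.findGreatest_le n

lemma i_le_Jmax {n : ℕ} (P : QRep n) {i : ℕ} {x : (P.M i).carrier}
    (hx : x ≠ (P.M i).z) : i ≤ Jmax P i x :=
  Nat.le_findGreatest (P := fun j => ∃ y : (P.M j).carrier, (P.down j i).f y = x)
    (P.ne_z_bounds hx).2 ⟨x, P.down_self i x⟩

lemma exists_orig {n : ℕ} (P : QRep n) {i : ℕ} {x : (P.M i).carrier}
    (hx : x ≠ (P.M i).z) :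
    ∃ y : (P.M (Jmax P i x)).carrier, (P.down (Jmax P i x) i).f y = x :=
  Nat.findGreatest_spec (P := fun j => ∃ y : (P.M j).carrier, (P.down j i).f y = x)
    (P.ne_z_bounds hx).2 ⟨x, P.down_self i x⟩

lemma origAt_spec {n : ℕ} (P : QRep n) {j i : ℕ} {x : (P.M i).carrier}
    (h : ∃ y : (P.M j).carrier, (P.down j i).f y = x) :
    (P.down j i).f (origAt P j i x) = x := by
  unfold origAt
  rw [dif_pos h]
  exact h.choose_spec

lemma origAt_unique {n : ℕ} (P : QRep n) {j i : ℕ} {x : (P.M i).carrier}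
    {y : (P.M j).carrier} (hx : x ≠ (P.M i).z) (hy : (P.down j i).f y = x) :
    y = origAt P j i x := by
  have hs := origAt_spec P (j := j) ⟨y, hy⟩
  exact (P.down j i).inj y _ (hy.trans hs.symm) (by rw [hy]; exact hx)

def pick {n : ℕ} (A B : QRep n) (f : QRepHom A B) (hf : f.Epi) (j : ℕ)
    (b : (B.M j).carrier) : (A.M j).carrier :=
  if b = (B.M j).z then (A.M j).z else (hf j b).choose

lemma pick_z {n : ℕ} (A B : QRep n) (f : QRepHom A B) (hf : f.Epi) (j : ℕ) :
    pick A B f hf j (B.M j).z = (A.M j).z := by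
  unfold pick
  rw [if_pos rfl]

lemma pick_spec {n : ℕ} (A B : QRep n) (f : QRepHom A B) (hf : f.Epi) (j : ℕ)
    (b : (B.M j).carrier) : (f.f j).f (pick A B f hf j b) = b := by
  unfold pick
  by_cases h : b = (B.M j).z
  · rw [if_pos h, (f.f j).map_z, h]
  · rw [if_neg h]
    exact (hf j b).choose_spec

def liftF {n : ℕ} (P A B : QRep n) (f : QRepHom A B) (g : QRepHom P B) (hf : f.Epi)
    (i : ℕ) (x : (P.M i).carrier) : (A.M i).carrier :=
  if x = (P.M i).z then (A.M i).z
  else (A.down (Jmax P i x) i).f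
    (pick A B f hf (Jmax P i x) ((g.f (Jmax P i x)).f (origAt P (Jmax P i x) i x)))

lemma liftF_z {n : ℕ} (P A B : QRep n) (f : QRepHom A B) (g : QRepHom P B)
    (hf : f.Epi) (i : ℕ) : liftF P A B f g hf i (P.M i).z = (A.M i).z := by
  unfold liftF
  rw [if_pos rfl]

lemma liftF_ne {n : ℕ} (P A B : QRep n) (f : QRepHom A B) (g : QRepHom P B)
    (hf : f.Epi) {i : ℕ} {x : (P.M i).carrier} (hx : x ≠ (P.M i).z) :
    liftF P A B f g hf i x = (A.down (Jmax P i x) i).f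
      (pick A B f hf (Jmax P i x) ((g.f (Jmax P i x)).f (origAt P (Jmax P i x) i x))) := by
  unfold liftF
  rw [if_neg hx]

lemma lift_comp {n : ℕ} (P A B : QRep n) (f : QRepHom A B) (g : QRepHom P B)
    (hf : f.Epi) : ∀ i x, (f.f i).f (liftF P A B f g hf i x) = (g.f i).f x := by
  intro i x
  by_cases hx : x = (P.M i).z
  · rw [hx, liftF_z, (f.f i).map_z, (g.f i).map_z]
  · rw [liftF_ne P A B f g hf hx, down_nat f (i_le_Jmax P hx), pick_spec,
        ← down_nat g (i_le_Jmax P hx), origAt_spec P (exists_orig P hx)]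

lemma Jmax_shift {n : ℕ} (P : QRep n) {i : ℕ} {x : (P.M (i+1)).carrier}
    (hx : x ≠ (P.M (i+1)).z) (hφ : (P.φ i).f x ≠ (P.M i).z) :
    Jmax P i ((P.φ i).f x) = Jmax P (i+1) x := by
  have hb := P.ne_z_bounds hx
  apply le_antisymm
  · obtain ⟨y, hy⟩ := exists_orig P hφ
    have hi1 : i + 1 ≤ Jmax P i ((P.φ i).f x) :=
      Nat.le_findGreatest
        (P := fun j => ∃ y : (P.M j).carrier, (P.down j i).f y = (P.φ i).f x)
        hb.2 ⟨x, by rw [P.down_of_le (le_refl i), P.down_self]⟩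
    have hy2 : (P.φ i).f ((P.down (Jmax P i ((P.φ i).f x)) (i+1)).f y) = (P.φ i).f x := by
      rw [P.down_bot hi1]
      exact hy
    have hy3 : (P.down (Jmax P i ((P.φ i).f x)) (i+1)).f y = x :=
      (P.φ i).inj _ _ hy2 (by rw [hy2]; exact hφ)
    exact Nat.le_findGreatest
      (P := fun j => ∃ y : (P.M j).carrier, (P.down j (i+1)).f y = x)
      (Jmax_le P i ((P.φ i).f x)) ⟨y, hy3⟩
  · obtain ⟨y, hy⟩ := exists_orig P hx
    have hi1 : i + 1 ≤ Jmax P (i+1) x := i_le_Jmax P hx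
    refine Nat.le_findGreatest
      (P := fun j => ∃ y : (P.M j).carrier, (P.down j i).f y = (P.φ i).f x)
      (Jmax_le P (i+1) x) ⟨y, ?_⟩
    rw [← P.down_bot hi1, hy]

lemma orig_shift {n : ℕ} (P : QRep n) {i : ℕ} {x : (P.M (i+1)).carrier}
    (hx : x ≠ (P.M (i+1)).z) (hφ : (P.φ i).f x ≠ (P.M i).z) :
    origAt P (Jmax P (i+1) x) i ((P.φ i).f x) = origAt P (Jmax P (i+1) x) (i+1) x := by
  have hy : (P.down (Jmax P (i+1) x) (i+1)).f (origAt P (Jmax P (i+1) x) (i+1) x) = x :=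
    origAt_spec P (exists_orig P hx)
  have h2 : (P.down (Jmax P (i+1) x) i).f (origAt P (Jmax P (i+1) x) (i+1) x)
      = (P.φ i).f x := by
    rw [← P.down_bot (i_le_Jmax P hx), hy]
  exact (origAt_unique P hφ h2).symm

lemma lift_comm {n : ℕ} (P A B : QRep n) (f : QRepHom A B) (g : QRepHom P B)
    (hf : f.Epi) (hinj : ∀ i, 1 ≤ i → i + 1 ≤ n → Injective ((P.φ i).f)) :
    ∀ i x, liftF P A B f g hf i ((P.φ i).f x)
      = (A.φ i).f (liftF P A B f g hf (i+1) x) := by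
  intro i x
  by_cases hx : x = (P.M (i+1)).z
  · rw [hx, (P.φ i).map_z, liftF_z, liftF_z, (A.φ i).map_z]
  · have hb := P.ne_z_bounds hx
    rcases Nat.eq_zero_or_pos i with hi0 | hi1
    · subst hi0
      have hz1 : (P.φ 0).f x = (P.M 0).z := P.supp 0 (Or.inl rfl) _
      rw [hz1, liftF_z]
      exact (A.supp 0 (Or.inl rfl) _).symm
    · have hφ : (P.φ i).f x ≠ (P.M i).z := by
        intro hc
        exact hx (hinj i hi1 hb.2 (hc.trans (P.φ i).map_z.symm))
      rw [liftF_ne P A B f g hf hφ, liftF_ne P A B f g hf hx,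
          Jmax_shift P hx hφ, orig_shift P hx hφ]
      exact (A.down_bot (i_le_Jmax P hx) _).symm

lemma lift_inj_aux {n : ℕ} (P A B : QRep n) (f : QRepHom A B) (g : QRepHom P B)
    (hf : f.Epi) {i : ℕ} {x x' : (P.M i).carrier}
    (hle : Jmax P i x ≤ Jmax P i x')
    (heq : liftF P A B f g hf i x = liftF P A B f g hf i x')
    (hnz : liftF P A B f g hf i x ≠ (A.M i).z) : x = x' := by
  have hx : x ≠ (P.M i).z := fun h => hnz (by rw [h, liftF_z])
  have hx' : x' ≠ (P.M i).z := fun h => hnz (by rw [heq, h, liftF_z])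
  rw [liftF_ne P A B f g hf hx] at heq hnz
  rw [liftF_ne P A B f g hf hx'] at heq
  set a := Jmax P i x with ha
  set a' := Jmax P i x' with ha'
  have hia : i ≤ a := i_le_Jmax P hx
  have hnu : pick A B f hf a ((g.f a).f (origAt P a i x)) ≠ (A.M a).z := by
    intro h
    apply hnz
    rw [h, (A.down a i).map_z]
  have hgz : (g.f a).f (origAt P a i x) ≠ (B.M a).z :=
    fun h => hnu (by rw [h]; exact pick_z A B f hf a)
  have key : pick A B f hf a ((g.f a).f (origAt P a i x))
      = (A.down a' a).f (pick A B f hf a' ((g.f a').f (origAt P a' i x'))) := by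
    apply (A.down a i).inj
    · rw [A.down_comp hia hle]
      exact heq
    · exact hnz
  have hfu : (g.f a).f (origAt P a i x)
      = (B.down a' a).f ((g.f a').f (origAt P a' i x')) := by
    have h1 := pick_spec A B f hf a ((g.f a).f (origAt P a i x))
    have h2 := pick_spec A B f hf a' ((g.f a').f (origAt P a' i x'))
    rw [← h1, key, down_nat f hle, h2]
  have horig : origAt P a i x = (P.down a' a).f (origAt P a' i x') := by
    apply (g.f a).inj
    · rw [hfu, ← down_nat g hle]
    · exact hgz
  calc x = (P.down a i).f (origAt P a i x) := (origAt_spec P (exists_orig P hx)).symm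
    _ = (P.down a i).f ((P.down a' a).f (origAt P a' i x')) := by rw [horig]
    _ = (P.down a' i).f (origAt P a' i x') := P.down_comp hia hle _
    _ = x' := origAt_spec P (exists_orig P hx')

lemma liftF_inj {n : ℕ} (P A B : QRep n) (f : QRepHom A B) (g : QRepHom P B)
    (hf : f.Epi) (i : ℕ) (x x' : (P.M i).carrier)
    (heq : liftF P A B f g hf i x = liftF P A B f g hf i x')
    (hnz : liftF P A B f g hf i x ≠ (A.M i).z) : x = x' := by
  rcases le_total (Jmax P i x) (Jmax P i x') with hle | hle
  · exact lift_inj_aux P A B f g hf hle heq hnz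
  · exact (lift_inj_aux P A B f g hf hle heq.symm (heq ▸ hnz)).symm

lemma inj_proj {n : ℕ} (P : QRep n)
    (hinj : ∀ i, 1 ≤ i → i + 1 ≤ n → Injective ((P.φ i).f)) : P.Projective := by
  intro A B f hf g
  exact ⟨⟨fun i => ⟨liftF P A B f g hf i, liftF_z P A B f g hf i, liftF_inj P A B f g hf i⟩,
          lift_comm P A B f g hf hinj⟩,
         lift_comp P A B f g hf⟩

/-! ### Projective implies injective structure maps -/

def ext1 (n i j : ℕ) : F1Mod where
  carrier := {b : Bool // b = true → j = i ∧ 1 ≤ i ∧ i + 1 ≤ n}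
  z := ⟨false, by simp⟩

lemma ext1_all_z {n i j : ℕ} (h : j ≠ i) (e : (ext1 n i j).carrier) :
    e = (ext1 n i j).z := by
  apply Subtype.ext
  show e.1 = false
  cases he : e.1
  · rfl
  · exact absurd (e.2 he).1 h

def ARep {n : ℕ} (P : QRep n) (i : ℕ) (h1 : 1 ≤ i) (h2 : i + 1 ≤ n)
    (a : (P.M (i+1)).carrier) (ha : a ≠ (P.M (i+1)).z)
    (hφa : (P.φ i).f a = (P.M i).z) : QRep n where
  M j := (P.M j).sum (ext1 n i j)
  φ j :=
    { f := fun x => ⟨((P.φ j).f x.1.1,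
        ⟨decide (∃ h : j + 1 = i + 1, h ▸ x.1.1 = a), fun hb => by
          obtain ⟨h, _⟩ := of_decide_eq_true hb
          exact ⟨Nat.succ_injective h, h1, h2⟩⟩), by
        by_cases hhit : ∃ h : j + 1 = i + 1, h ▸ x.1.1 = a
        · left
          obtain ⟨h, he⟩ := hhit
          have hj : j = i := Nat.succ_injective h
          subst hj
          have hxa : x.1.1 = a := he
          rw [hxa, hφa]
        · right
          exact Subtype.ext (decide_eq_false hhit)⟩
      map_z := by
        apply Subtype.ext
        apply Prod.ext_iff.mpr
        constructor
        · exact (P.φ j).map_z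
        · apply Subtype.ext
          show decide _ = false
          apply decide_eq_false
          rintro ⟨h, he⟩
          have hj : j = i := Nat.succ_injective h
          subst hj
          exact ha he.symm
      inj := by
        intro x y hxy hnz
        have hc1 : (P.φ j).f x.1.1 = (P.φ j).f y.1.1 := congrArg (fun t => t.1.1) hxy
        have hc2 : decide (∃ h : j + 1 = i + 1, h ▸ x.1.1 = a)
            = decide (∃ h : j + 1 = i + 1, h ▸ y.1.1 = a) :=
          congrArg (fun t => t.1.2.1) hxy
        by_cases hbx : decide (∃ h : j + 1 = i + 1, h ▸ x.1.1 = a) = true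
        · have hhx := of_decide_eq_true hbx
          have hhy := of_decide_eq_true (hc2 ▸ hbx)
          obtain ⟨h, hex⟩ := hhx
          obtain ⟨h', hey⟩ := hhy
          have hj : j = i := Nat.succ_injective h
          subst hj
          have hex' : x.1.1 = a := hex
          have hey' : y.1.1 = a := hey
          apply Subtype.ext
          apply Prod.ext_iff.mpr
          exact ⟨hex'.trans hey'.symm,
            (ext1_all_z (by omega) x.1.2).trans (ext1_all_z (by omega) y.1.2).symm⟩
        · have hbx' : decide (∃ h : j + 1 = i + 1, h ▸ x.1.1 = a) = false :=
            Bool.eq_false_iff.mpr hbx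
          have hφx : (P.φ j).f x.1.1 ≠ (P.M j).z := by
            intro hz
            apply hnz
            apply Subtype.ext
            apply Prod.ext_iff.mpr
            exact ⟨hz, Subtype.ext hbx'⟩
          have hxy1 : x.1.1 = y.1.1 := (P.φ j).inj _ _ hc1 hφx
          have hxne : x.1.1 ≠ (P.M (j+1)).z := by
            intro hz
            exact hφx (by rw [hz, (P.φ j).map_z])
          have hx2 : x.1.2 = (ext1 n i (j+1)).z := x.2.resolve_left hxne
          have hy2 : y.1.2 = (ext1 n i (j+1)).z := y.2.resolve_left (hxy1 ▸ hxne)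
          apply Subtype.ext
          apply Prod.ext_iff.mpr
          exact ⟨hxy1, hx2.trans hy2.symm⟩ }
  supp := by
    intro j hj x
    apply Subtype.ext
    apply Prod.ext_iff.mpr
    exact ⟨P.supp j hj x.1.1, ext1_all_z (by omega) x.1.2⟩

lemma phi_ker_trivial {n : ℕ} (P : QRep n) (hproj : P.Projective) (i : ℕ)
    (h1 : 1 ≤ i) (h2 : i + 1 ≤ n) (a : (P.M (i+1)).carrier)
    (hφa : (P.φ i).f a = (P.M i).z) : a = (P.M (i+1)).z := by
  by_contra ha
  set R := ARep P i h1 h2 a ha hφa with hR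
  obtain ⟨h, hspec⟩ := hproj R P ⟨fun j => F1Hom.pr1 _ _, fun j x => rfl⟩
    (fun j b => ⟨⟨(b, (ext1 n i j).z), Or.inr rfl⟩, rfl⟩) (QRepHom.idH P)
  have hua : ((h.f (i+1)).f a).1.1 = a := hspec (i+1) a
  have hcomm := h.comm i a
  rw [hφa, (h.f i).map_z] at hcomm
  have hval : (false : Bool)
      = decide (∃ hh : i + 1 = i + 1, hh ▸ ((h.f (i+1)).f a).1.1 = a) :=
    congrArg (fun t => t.1.2.1) hcomm
  rw [decide_eq_true (⟨rfl, hua⟩ :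
      ∃ hh : i + 1 = i + 1, hh ▸ ((h.f (i+1)).f a).1.1 = a)] at hval
  exact Bool.noConfusion hval

/-- A representation of the linearly oriented `A_n` quiver
is projective iff all its structure maps (along the genuine arrows) are
injective.  In particular `[k,l]` is projective iff `k = 1`. -/
theorem projective_iff_injective_maps (n : ℕ) :
    (∀ M : QRep n,
      M.Projective ↔ ∀ i, 1 ≤ i → i + 1 ≤ n → Injective ((M.φ i).f)) ∧
    (∀ k l, 1 ≤ k → k ≤ l → l ≤ n →
      ((interval n k l).Projective ↔ k = 1)) := by
  have main : ∀ M : QRep n,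
      M.Projective ↔ ∀ i, 1 ≤ i → i + 1 ≤ n → Injective ((M.φ i).f) := by
    intro M
    constructor
    · intro hproj i h1 h2 u v huv
      by_cases hz : (M.φ i).f u = (M.M i).z
      · have hu := phi_ker_trivial M hproj i h1 h2 u hz
        have hv := phi_ker_trivial M hproj i h1 h2 v (huv ▸ hz)
        rw [hu, hv]
      · exact (M.φ i).inj u v huv hz
    · intro hinj
      exact inj_proj M hinj
  refine ⟨main, ?_⟩
  intro k l hk hkl hln
  rw [main]
  constructor
  · intro hinj
    by_contra hne
    obtain ⟨m, rfl⟩ : ∃ m, k = m + 2 := ⟨k - 2, by omega⟩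
    have hinj' := hinj (m+1) (by omega) (by omega)
    have hz : (⟨true, fun _ => ⟨by omega, le_refl _, hkl, hln⟩⟩ :
        ((interval n (m+2) l).M (m+2)).carrier) = ((interval n (m+2) l).M (m+2)).z := by
      apply hinj'
      apply Subtype.ext
      show (true && decide (m + 2 ≤ m + 1)) = (false && decide (m + 2 ≤ m + 1))
      rw [decide_eq_false (by omega : ¬ (m + 2 ≤ m + 1))]
      rfl
    exact Bool.noConfusion (congrArg Subtype.val hz)
  · intro hk1 i h1i _
    subst hk1
    intro a b hab
    have hval : (a.1 && decide (1 ≤ i)) = (b.1 && decide (1 ≤ i)) :=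
      congrArg Subtype.val hab
    rw [decide_eq_true h1i, Bool.and_true, Bool.and_true] at hval
    exact Subtype.ext hval
end
end

section
/- For the linearly oriented A_n quiver Q, the category rep(Q, F1) has enough projectives: for every F1-representation M there exists a representation P with all structure maps injective and an epimorphism P ↠ M. -/
noncomputable section
open Function
attribute [local instance] Classical.propDecidable

namespace EP

variable {n : ℕ}

/-- The total step map on the disjoint union of all vertex spaces. -/
def T (M : QRep n) : (Σ j : ℕ, (M.M j).carrier) → (Σ j : ℕ, (M.M j).carrier)
  | ⟨0, x⟩ => ⟨0, x⟩
  | ⟨j+1, x⟩ => ⟨j, (M.φ j).f x⟩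

def IsZ (M : QRep n) (s : Σ j : ℕ, (M.M j).carrier) : Prop := s.2 = (M.M s.1).z

lemma T_fst (M : QRep n) (s : Σ j : ℕ, (M.M j).carrier) : (T M s).1 = s.1 - 1 := by
  obtain ⟨j, x⟩ := s
  cases j <;> rfl

lemma T_iter_fst (M : QRep n) (k : ℕ) :
    ∀ s : Σ j : ℕ, (M.M j).carrier, ((T M)^[k] s).1 = s.1 - k := by
  induction k with
  | zero => intro s; rfl
  | succ k ih =>
    intro s
    rw [Function.iterate_succ_apply, ih, T_fst]
    omega

lemma T_z (M : QRep n) (s : Σ j : ℕ, (M.M j).carrier) (h : IsZ M s) : IsZ M (T M s) := by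
  obtain ⟨j, x⟩ := s
  cases j with
  | zero => exact h
  | succ j =>
    show (M.φ j).f x = (M.M j).z
    have hx : x = (M.M (j+1)).z := h
    rw [hx, (M.φ j).map_z]

lemma T_iter_z (M : QRep n) (k : ℕ) :
    ∀ s : Σ j : ℕ, (M.M j).carrier, IsZ M s → IsZ M ((T M)^[k] s) := by
  induction k with
  | zero => intro s h; exact h
  | succ k ih => intro s h; rw [Function.iterate_succ_apply]; exact ih _ (T_z M s h)

lemma T_inj (M : QRep n) (s s' : Σ j : ℕ, (M.M j).carrier) (h : T M s = T M s')
    (h1 : 1 ≤ s.1) (h1' : 1 ≤ s'.1) (hnz : ¬ IsZ M (T M s)) : s = s' := by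
  obtain ⟨j, x⟩ := s
  obtain ⟨j', x'⟩ := s'
  cases j with
  | zero => exact (Nat.not_succ_le_zero 0 h1).elim
  | succ j =>
    cases j' with
    | zero => exact (Nat.not_succ_le_zero 0 h1').elim
    | succ j' =>
      have h' : (⟨j, (M.φ j).f x⟩ : Σ j : ℕ, (M.M j).carrier) = ⟨j', (M.φ j').f x'⟩ := h
      have hf : j = j' := congrArg (fun s => s.1) h'
      subst hf
      have h2 : (M.φ j).f x = (M.φ j).f x' := eq_of_heq (Sigma.ext_iff.mp h').2
      have hx : x = x' := (M.φ j).inj _ _ h2 hnz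
      rw [hx]

lemma T_iter_inj (M : QRep n) (k : ℕ) :
    ∀ s s' : Σ j : ℕ, (M.M j).carrier, (T M)^[k] s = (T M)^[k] s' →
      k ≤ s.1 → k ≤ s'.1 → ¬ IsZ M ((T M)^[k] s) → s = s' := by
  induction k with
  | zero => intro s s' h _ _ _; exact h
  | succ k ih =>
    intro s s' h hk hk' hnz
    simp only [Function.iterate_succ_apply'] at h hnz
    have l1 : 1 ≤ ((T M)^[k] s).1 := by rw [T_iter_fst]; omega
    have l1' : 1 ≤ ((T M)^[k] s').1 := by rw [T_iter_fst]; omega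
    have heq := T_inj M _ _ h l1 l1' hnz
    have hnz2 : ¬ IsZ M ((T M)^[k] s) := fun hz => hnz (T_z M _ hz)
    exact ih _ _ heq (by omega) (by omega) hnz2

/-- Extract the component at level `i`. -/
def ext (M : QRep n) (i : ℕ) (s : Σ j : ℕ, (M.M j).carrier) : (M.M i).carrier :=
  if h : s.1 = i then h ▸ s.2 else (M.M i).z

lemma ext_mk (M : QRep n) (i : ℕ) (v : (M.M i).carrier) : ext M i ⟨i, v⟩ = v := by
  simp [ext]

lemma T_iter_level (M : QRep n) (i j : ℕ) (hij : i ≤ j) (x : (M.M j).carrier) :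
    (T M)^[j - i] ⟨j, x⟩ = ⟨i, ext M i ((T M)^[j - i] ⟨j, x⟩)⟩ := by
  have h5 := T_iter_fst M (j - i) (⟨j, x⟩ : Σ j : ℕ, (M.M j).carrier)
  generalize hq : (T M)^[j - i] (⟨j, x⟩ : Σ j : ℕ, (M.M j).carrier) = u at *
  obtain ⟨a, v⟩ := u
  have h6 : i = a := by
    have h8 : a = j - (j - i) := h5
    omega
  subst h6
  rw [ext_mk]

/-- An element `born` at vertex `j`: not in the image of the structure map. -/
def Born (M : QRep n) (j : ℕ) (x : (M.M j).carrier) : Prop := ∀ w, (M.φ j).f w ≠ x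

/-- The underlying set of the projective cover at vertex `i`. -/
def PSet (M : QRep n) (i : ℕ) : Type :=
  {p : (j : Fin (n+1)) × (M.M j.1).carrier // 1 ≤ i ∧ i ≤ p.1.1 ∧ Born M p.1.1 p.2}

noncomputable instance (M : QRep n) (i : ℕ) : Fintype (PSet M i) := by
  unfold PSet; infer_instance

/-- The map from the projective cover to `M` at vertex `i`. -/
noncomputable def fMap (M : QRep n) (i : ℕ) : Option (PSet M i) → (M.M i).carrier
  | none => (M.M i).z
  | some p => ext M i ((T M)^[p.1.1.1 - i] ⟨p.1.1.1, p.1.2⟩)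

/-- The structure map of the projective cover. -/
def Pφf (M : QRep n) (i : ℕ) : Option (PSet M (i+1)) → Option (PSet M i)
  | none => none
  | some p => if h : 1 ≤ i then
      some ⟨p.1, h, Nat.le_of_succ_le p.2.2.1, p.2.2.2⟩ else none


lemma fMap_inj_aux (M : QRep n) (i j j' : ℕ) (x : (M.M j).carrier) (x' : (M.M j').carrier)
    (hij : i ≤ j) (hij' : i ≤ j') (hjj : j ≤ j') (hb : Born M j x)
    (he : (T M)^[j - i] ⟨j, x⟩ = (T M)^[j' - i] ⟨j', x'⟩)
    (hnz : ¬ IsZ M ((T M)^[j - i] ⟨j, x⟩)) :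
    (⟨j, x⟩ : Σ j : ℕ, (M.M j).carrier) = ⟨j', x'⟩ := by
  have key : (T M)^[j - i] ⟨j, x⟩ = (T M)^[j - i] ((T M)^[j' - j] ⟨j', x'⟩) := by
    rw [← Function.iterate_add_apply, show j - i + (j' - j) = j' - i by omega]
    exact he
  have hfst : ((T M)^[j' - j] (⟨j', x'⟩ : Σ j : ℕ, (M.M j).carrier)).1 = j := by
    rw [T_iter_fst]
    show j' - (j' - j) = j
    omega
  have heq := T_iter_inj M (j - i) _ _ key (by show j - i ≤ j; omega)
    (by rw [hfst]; omega) hnz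
  by_cases hjj' : j = j'
  · subst hjj'
    simpa using heq
  · exfalso
    rw [show j' - j = (j' - j - 1) + 1 by omega, Function.iterate_succ_apply'] at heq
    rcases hu : (T M)^[j' - j - 1] (⟨j', x'⟩ : Σ j : ℕ, (M.M j).carrier) with ⟨a, w⟩
    have ha : a = j + 1 := by
      have h5 := T_iter_fst M (j' - j - 1) (⟨j', x'⟩ : Σ j : ℕ, (M.M j).carrier)
      rw [hu] at h5
      have h6 : a = j' - (j' - j - 1) := h5
      omega
    subst ha
    rw [hu] at heq
    have h2 : (M.φ j).f w = x := (eq_of_heq (Sigma.ext_iff.mp heq).2).symm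
    exact hb w h2

lemma fMap_surj_aux (M : QRep n) : ∀ d i (y : (M.M i).carrier), n + 1 ≤ i + d → 1 ≤ i →
    y ≠ (M.M i).z →
    ∃ (j : ℕ) (x : (M.M j).carrier), i ≤ j ∧ j ≤ n ∧ Born M j x ∧
      (T M)^[j - i] ⟨j, x⟩ = ⟨i, y⟩ := by
  intro d
  induction d with
  | zero =>
    intro i y hd _ hy
    exact absurd (M.supp i (Or.inr (by omega)) y) hy
  | succ d ih =>
    intro i y hd h1 hy
    have hin : i ≤ n := by
      by_contra hc
      exact hy (M.supp i (Or.inr (by omega)) y)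
    by_cases hb : Born M i y
    · exact ⟨i, y, le_refl i, hin, hb, by rw [Nat.sub_self]; rfl⟩
    · simp only [Born, not_forall, not_not] at hb
      obtain ⟨w, hw⟩ := hb
      have hwz : w ≠ (M.M (i+1)).z := by
        intro hz
        rw [hz, (M.φ i).map_z] at hw
        exact hy hw.symm
      obtain ⟨j, x, hij, hjn, hbx, hT⟩ := ih (i+1) w (by omega) (by omega) hwz
      refine ⟨j, x, by omega, hjn, hbx, ?_⟩
      rw [show j - i = (j - (i+1)) + 1 by omega, Function.iterate_succ_apply', hT]
      show (⟨i, (M.φ i).f w⟩ : Σ j : ℕ, (M.M j).carrier) = ⟨i, y⟩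
      rw [hw]

/-- The projective cover representation. -/
noncomputable def PRep (M : QRep n) : QRep n where
  M i := { carrier := Option (PSet M i), z := none }
  φ i := { f := Pφf M i
           map_z := rfl
           inj := by
             intro a b hab hnz
             cases a with
             | none => exact absurd rfl hnz
             | some pa =>
               cases b with
               | none =>
                 exfalso
                 by_cases h : 1 ≤ i
                 · rw [show Pφf M i (some pa) = some ⟨pa.1, h, Nat.le_of_succ_le pa.2.2.1,
                     pa.2.2.2⟩ from dif_pos h] at hab
                   exact Option.some_ne_none _ hab
                 · exact hnz (by rw [show Pφf M i (some pa) = none from dif_neg h])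
               | some pb =>
                 by_cases h : 1 ≤ i
                 · rw [show Pφf M i (some pa) = some ⟨pa.1, h, Nat.le_of_succ_le pa.2.2.1,
                     pa.2.2.2⟩ from dif_pos h,
                     show Pφf M i (some pb) = some ⟨pb.1, h, Nat.le_of_succ_le pb.2.2.1,
                     pb.2.2.2⟩ from dif_pos h] at hab
                   have := congrArg (fun o => o.map Subtype.val) hab
                   replace this : some pa.1 = some pb.1 := this
                   have hv : pa.1 = pb.1 := Option.some.inj this
                   congr 1
                   exact Subtype.ext hv
                 · exact absurd (by rw [show Pφf M i (some pa) = none from dif_neg h]) hnz }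
  supp := by
    intro i hi x
    cases x with
    | none => rfl
    | some p =>
      exfalso
      have h1 := p.2.1
      have h2 := p.2.2.1
      have h3 := p.1.1.isLt
      rcases hi with hi | hi <;> omega

/-- The epimorphism from the projective cover. -/
noncomputable def fHom (M : QRep n) : QRepHom (PRep M) M where
  f i := { f := fMap M i
           map_z := rfl
           inj := by
             intro a b hab hnz
             cases a with
             | none => exact absurd rfl hnz
             | some pa =>
               cases b with
               | none => exact absurd (hab.trans rfl) hnz
               | some pb =>
                 set j := pa.1.1.1 with hj
                 set j' := pb.1.1.1 with hj'
                 have hija : i ≤ j := pa.2.2.1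
                 have hijb : i ≤ j' := pb.2.2.1
                 have hba : Born M j pa.1.2 := pa.2.2.2
                 have hbb : Born M j' pb.1.2 := pb.2.2.2
                 have hab' : ext M i ((T M)^[j - i] ⟨j, pa.1.2⟩)
                     = ext M i ((T M)^[j' - i] ⟨j', pb.1.2⟩) := hab
                 have hnz2 : ext M i ((T M)^[j - i] ⟨j, pa.1.2⟩) ≠ (M.M i).z := hnz
                 have hnz' : ¬ IsZ M ((T M)^[j - i] ⟨j, pa.1.2⟩) := by
                   intro hz
                   apply hnz2
                   rw [T_iter_level M i j hija] at hz
                   exact hz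
                 have hnzb : ¬ IsZ M ((T M)^[j' - i] ⟨j', pb.1.2⟩) := by
                   intro hz
                   apply hnz2
                   rw [hab']
                   rw [T_iter_level M i j' hijb] at hz
                   exact hz
                 have hee : (T M)^[j - i] (⟨j, pa.1.2⟩ : Σ j : ℕ, (M.M j).carrier)
                     = (T M)^[j' - i] ⟨j', pb.1.2⟩ := by
                   rw [T_iter_level M i j hija, T_iter_level M i j' hijb]
                   exact congrArg (fun v => (⟨i, v⟩ : Σ j : ℕ, (M.M j).carrier)) hab'
                 have hsig : (⟨j, pa.1.2⟩ : Σ j : ℕ, (M.M j).carrier) = ⟨j', pb.1.2⟩ := by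
                   rcases le_total j j' with hle | hle
                   · exact fMap_inj_aux M i j j' _ _ hija hijb hle hba hee hnz'
                   · exact (fMap_inj_aux M i j' j _ _ hijb hija hle hbb hee.symm hnzb).symm
                 have hfst : j = j' := congrArg (fun s => s.1) hsig
                 have hsnd := (Sigma.ext_iff.mp hsig).2
                 congr 1
                 apply Subtype.ext
                 exact Sigma.ext (Fin.ext hfst) hsnd }
  comm := by
    intro i x
    cases x with
    | none =>
      show (M.M i).z = (M.φ i).f (M.M (i+1)).z
      exact ((M.φ i).map_z).symm
    | some p =>
      by_cases h : 1 ≤ i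
      · show fMap M i (Pφf M i (some p)) = (M.φ i).f (fMap M (i+1) (some p))
        rw [show Pφf M i (some p) = some ⟨p.1, h, Nat.le_of_succ_le p.2.2.1, p.2.2.2⟩
          from dif_pos h]
        set j := p.1.1.1 with hj
        have hij : i + 1 ≤ j := p.2.2.1
        show ext M i ((T M)^[j - i] ⟨j, p.1.2⟩)
          = (M.φ i).f (ext M (i+1) ((T M)^[j - (i+1)] ⟨j, p.1.2⟩))
        rw [show j - i = (j - (i+1)) + 1 by omega, Function.iterate_succ_apply',
          T_iter_level M (i+1) j hij]
        show ext M i ⟨i, (M.φ i).f (ext M (i+1) ((T M)^[j - (i+1)] ⟨j, p.1.2⟩))⟩ = _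
        rw [ext_mk, ext_mk]
      · have hi : i = 0 := by omega
        subst hi
        show fMap M 0 (Pφf M 0 (some p)) = (M.φ 0).f (fMap M 1 (some p))
        have hnone : Pφf M 0 (some p) = none := by
          simp only [Pφf]
          rw [dif_neg h]
        rw [hnone]
        exact (M.supp 0 (Or.inl rfl) _).symm

end EP

/-- The category of representations of the linearly
oriented `A_n` quiver has enough projectives: every representation admits an
epimorphism from a representation with injective structure maps. -/
theorem enough_projectives (n : ℕ) (M : QRep n) :
    ∃ (P : QRep n) (f : QRepHom P M),
      (∀ i, 1 ≤ i → i + 1 ≤ n → Injective ((P.φ i).f)) ∧ f.Epi := by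
  refine ⟨EP.PRep M, EP.fHom M, ?_, ?_⟩
  · intro i h1 _ a b hab
    have hab' : EP.Pφf M i a = EP.Pφf M i b := hab
    cases a with
    | none =>
      cases b with
      | none => rfl
      | some pb =>
        exfalso
        rw [show EP.Pφf M i (some pb)
          = some ⟨pb.1, h1, Nat.le_of_succ_le pb.2.2.1, pb.2.2.2⟩ from dif_pos h1] at hab'
        exact Option.some_ne_none _ hab'.symm
    | some pa =>
      cases b with
      | none =>
        exfalso
        rw [show EP.Pφf M i (some pa)
          = some ⟨pa.1, h1, Nat.le_of_succ_le pa.2.2.1, pa.2.2.2⟩ from dif_pos h1] at hab'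
        exact Option.some_ne_none _ hab'
      | some pb =>
        rw [show EP.Pφf M i (some pa)
          = some ⟨pa.1, h1, Nat.le_of_succ_le pa.2.2.1, pa.2.2.2⟩ from dif_pos h1,
          show EP.Pφf M i (some pb)
          = some ⟨pb.1, h1, Nat.le_of_succ_le pb.2.2.1, pb.2.2.2⟩ from dif_pos h1] at hab'
        have := congrArg (fun o => Option.map Subtype.val o) hab'
        replace this : some pa.1 = some pb.1 := this
        have hv : pa.1 = pb.1 := Option.some.inj this
        congr 1
        exact Subtype.ext hv
  · intro i y
    by_cases hy : y = (M.M i).z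
    · exact ⟨none, hy.symm⟩
    · have h1 : 1 ≤ i := by
        by_contra hc
        exact hy (M.supp i (Or.inl (by omega)) y)
      have h2 : i ≤ n := by
        by_contra hc
        exact hy (M.supp i (Or.inr (by omega)) y)
      obtain ⟨j, x, hij, hjn, hb, hT⟩ :=
        EP.fMap_surj_aux M (n + 1 - i) i y (by omega) h1 hy
      refine ⟨some ⟨⟨⟨j, by omega⟩, x⟩, h1, hij, hb⟩, ?_⟩
      show EP.ext M i ((EP.T M)^[j - i] ⟨j, x⟩) = y
      rw [hT, EP.ext_mk]
end
end

section
/- For the quiver Q: 3 → 2 ← 1, the indecomposable F1-representation M with F1 at all three vertices and identity maps on both arrows satisfies Ext¹(M, X) = 0 for every representation X, but M is not projective. In particular, Ext¹(M,−) = 0 does not imply projectivity in rep(Q,F1). -/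
noncomputable section
open Function
attribute [local instance] Classical.propDecidable

/-! ## Representations of the quiver `3 → 2 ← 1` over `F1`. -/

structure RepY where
  M1 : F1Mod
  M2 : F1Mod
  M3 : F1Mod
  a : F1Hom M3 M2
  b : F1Hom M1 M2

structure RepYHom (A B : RepY) where
  f1 : F1Hom A.M1 B.M1
  f2 : F1Hom A.M2 B.M2
  f3 : F1Hom A.M3 B.M3
  comm_a : ∀ x, f2.f (A.a.f x) = B.a.f (f3.f x)
  comm_b : ∀ x, f2.f (A.b.f x) = B.b.f (f1.f x)

/-- Epimorphisms are the vertex-wise surjective morphisms. -/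
def RepYHom.Epi {A B : RepY} (h : RepYHom A B) : Prop :=
  Surjective h.f1.f ∧ Surjective h.f2.f ∧ Surjective h.f3.f

/-- Vertex-wise bijective morphisms (isomorphisms). -/
def RepYHom.IsIso {A B : RepY} (h : RepYHom A B) : Prop :=
  Bijective h.f1.f ∧ Bijective h.f2.f ∧ Bijective h.f3.f

/-- A projective representation of the quiver `3 → 2 ← 1`. -/
def RepY.Projective (P : RepY) : Prop :=
  ∀ (A B : RepY) (f : RepYHom A B), f.Epi → ∀ g : RepYHom P B,
    ∃ h : RepYHom P A,
      (∀ x, f.f1.f (h.f1.f x) = g.f1.f x) ∧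
      (∀ x, f.f2.f (h.f2.f x) = g.f2.f x) ∧
      (∀ x, f.f3.f (h.f3.f x) = g.f3.f x)

/-- The one-dimensional `F1`-vector space. -/
def F1one : F1Mod := { carrier := Bool, z := false }

/-- The sincere indecomposable representation `M` of `3 → 2 ← 1`:
`F1` at every vertex and identity structure maps. -/
def MY : RepY where
  M1 := F1one
  M2 := F1one
  M3 := F1one
  a := F1Hom.idH F1one
  b := F1Hom.idH F1one

/-- Direct sum (vertex-wise wedge sum) of representations of `3 → 2 ← 1`. -/
def RepY.sum (A B : RepY) : RepY where
  M1 := A.M1.sum B.M1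
  M2 := A.M2.sum B.M2
  M3 := A.M3.sum B.M3
  a := F1Hom.sum A.a B.a
  b := F1Hom.sum A.b B.b

/-- Inclusion of the first summand. -/
def RepY.inlY (A B : RepY) : RepYHom A (A.sum B) where
  f1 := F1Hom.inl A.M1 B.M1
  f2 := F1Hom.inl A.M2 B.M2
  f3 := F1Hom.inl A.M3 B.M3
  comm_a := by
    intro x
    apply Subtype.ext
    show (A.a.f x, B.M2.z) = (A.a.f x, B.a.f B.M3.z)
    rw [B.a.map_z]
  comm_b := by
    intro x
    apply Subtype.ext
    show (A.b.f x, B.M2.z) = (A.b.f x, B.b.f B.M1.z)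
    rw [B.b.map_z]

/-- Projection onto the first summand. -/
def RepY.pr1Y (A B : RepY) : RepYHom (A.sum B) A where
  f1 := F1Hom.pr1 A.M1 B.M1
  f2 := F1Hom.pr1 A.M2 B.M2
  f3 := F1Hom.pr1 A.M3 B.M3
  comm_a := fun _ => rfl
  comm_b := fun _ => rfl

/-- Projection onto the second summand. -/
def RepY.pr2Y (A B : RepY) : RepYHom (A.sum B) B where
  f1 := F1Hom.pr2 A.M1 B.M1
  f2 := F1Hom.pr2 A.M2 B.M2
  f3 := F1Hom.pr2 A.M3 B.M3
  comm_a := fun _ => rfl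
  comm_b := fun _ => rfl

/-- A short exact sequence `L ↣ E ↠ N` of representations of `3 → 2 ← 1`. -/
structure SESY (L N : RepY) where
  E : RepY
  ι : RepYHom L E
  π : RepYHom E N
  mono : Injective ι.f1.f ∧ Injective ι.f2.f ∧ Injective ι.f3.f
  epi : π.Epi
  exact1 : ∀ x, (π.f1.f x = N.M1.z ↔ ∃ y, ι.f1.f y = x)
  exact2 : ∀ x, (π.f2.f x = N.M2.z ↔ ∃ y, ι.f2.f y = x)
  exact3 : ∀ x, (π.f3.f x = N.M3.z ↔ ∃ y, ι.f3.f y = x)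

/-- A morphism of short exact sequences fixing the end terms. -/
def SESY.Leads {L N : RepY} (s t : SESY L N) : Prop :=
  ∃ g : RepYHom s.E t.E,
    (∀ x, g.f1.f (s.ι.f1.f x) = t.ι.f1.f x) ∧
    (∀ x, g.f2.f (s.ι.f2.f x) = t.ι.f2.f x) ∧
    (∀ x, g.f3.f (s.ι.f3.f x) = t.ι.f3.f x) ∧
    (∀ x, t.π.f1.f (g.f1.f x) = s.π.f1.f x) ∧
    (∀ x, t.π.f2.f (g.f2.f x) = s.π.f2.f x) ∧
    (∀ x, t.π.f3.f (g.f3.f x) = s.π.f3.f x)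

/-- The split short exact sequence `L ↣ L ⊕ N ↠ N`, the zero element of
`Ext¹(N, L)`. -/
def splitSESY (L N : RepY) : SESY L N where
  E := L.sum N
  ι := RepY.inlY L N
  π := RepY.pr2Y L N
  mono := ⟨fun _ _ hab => congrArg (fun t => t.1.1) hab,
           fun _ _ hab => congrArg (fun t => t.1.1) hab,
           fun _ _ hab => congrArg (fun t => t.1.1) hab⟩
  epi := ⟨fun y => ⟨⟨(L.M1.z, y), Or.inl rfl⟩, rfl⟩,
          fun y => ⟨⟨(L.M2.z, y), Or.inl rfl⟩, rfl⟩,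
          fun y => ⟨⟨(L.M3.z, y), Or.inl rfl⟩, rfl⟩⟩
  exact1 := fun x =>
    ⟨fun hx => ⟨x.1.1, Subtype.ext (Prod.ext_iff.mpr ⟨rfl, hx.symm⟩)⟩,
     fun ⟨_, hy⟩ => (congrArg (fun t => t.1.2) hy).symm⟩
  exact2 := fun x =>
    ⟨fun hx => ⟨x.1.1, Subtype.ext (Prod.ext_iff.mpr ⟨rfl, hx.symm⟩)⟩,
     fun ⟨_, hy⟩ => (congrArg (fun t => t.1.2) hy).symm⟩
  exact3 := fun x =>
    ⟨fun hx => ⟨x.1.1, Subtype.ext (Prod.ext_iff.mpr ⟨rfl, hx.symm⟩)⟩,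
     fun ⟨_, hy⟩ => (congrArg (fun t => t.1.2) hy).symm⟩

/-! ### Auxiliary: splitting a short exact sequence ending in `F1` -/

section Vsplit

variable {V W : F1Mod} (i : F1Hom V W) (p : F1Hom W F1one)

/-- The vertexwise splitting map `W → V ⊕ F1`. -/
def vsplit (hex : ∀ x, p.f x = false ↔ ∃ y, i.f y = x) (x : W.carrier) :
    (V.sum F1one).carrier :=
  if h : p.f x = true then ⟨(V.z, true), Or.inl rfl⟩
  else ⟨(((hex x).mp (Bool.eq_false_iff.mpr h)).choose, false), Or.inr rfl⟩

lemma vsplit_img (hinj : Injective i.f)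
    (hex : ∀ x, p.f x = false ↔ ∃ y, i.f y = x) (y : V.carrier) :
    vsplit i p hex (i.f y) = ⟨(y, false), Or.inr rfl⟩ := by
  have hf : p.f (i.f y) = false := (hex _).mpr ⟨y, rfl⟩
  have h : ¬ p.f (i.f y) = true := fun ht => Bool.noConfusion (ht.symm.trans hf)
  erw [vsplit, dif_neg h]
  have hs := ((hex (i.f y)).mp (Bool.eq_false_iff.mpr h)).choose_spec
  exact Subtype.ext (Prod.ext_iff.mpr ⟨hinj hs, rfl⟩)

lemma vsplit_top (hex : ∀ x, p.f x = false ↔ ∃ y, i.f y = x)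
    (x : W.carrier) (hx : p.f x = true) :
    vsplit i p hex x = ⟨(V.z, true), Or.inl rfl⟩ := by
  erw [vsplit, dif_pos hx]

lemma vsplit_snd (hex : ∀ x, p.f x = false ↔ ∃ y, i.f y = x) (x : W.carrier) :
    (vsplit i p hex x).1.2 = p.f x := by
  by_cases h : p.f x = true
  · erw [vsplit, dif_pos h, h]
  · erw [vsplit, dif_neg h]
    exact (Bool.eq_false_iff.mpr h).symm

/-- The vertexwise splitting as an `F1`-linear map. -/
def vsplitHom (hinj : Injective i.f)
    (hex : ∀ x, p.f x = false ↔ ∃ y, i.f y = x) : F1Hom W (V.sum F1one) where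
  f := vsplit i p hex
  map_z := by
    have h : vsplit i p hex (i.f V.z) = ⟨(V.z, false), Or.inr rfl⟩ :=
      vsplit_img i p hinj hex V.z
    rw [i.map_z] at h
    rw [h]
    exact Subtype.ext rfl
  inj := by
    intro a b hab _
    have hpab : p.f a = p.f b :=
      (vsplit_snd i p hex a).symm.trans
        ((congrArg (fun t => t.1.2) hab).trans (vsplit_snd i p hex b))
    by_cases ha : p.f a = true
    · exact p.inj a b hpab (fun hz => Bool.noConfusion (ha.symm.trans hz))
    · have hea := ((hex a).mp (Bool.eq_false_iff.mpr ha)).choose_spec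
      have hb : ¬ p.f b = true := fun ht => ha (hpab.trans ht)
      have heb := ((hex b).mp (Bool.eq_false_iff.mpr hb)).choose_spec
      erw [vsplit, dif_neg ha, vsplit, dif_neg hb] at hab
      have h1 := congrArg (fun t => t.1.1) hab
      rw [← hea, ← heb]
      exact congrArg i.f h1

lemma vsplitHom_f (hinj : Injective i.f)
    (hex : ∀ x, p.f x = false ↔ ∃ y, i.f y = x) (x : W.carrier) :
    (vsplitHom i p hinj hex).f x = vsplit i p hex x := rfl

end Vsplit

/-- Part 1: every short exact sequence ending in `M` splits. -/
theorem sesy_splits (X : RepY) (s : SESY X MY) :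
    SESY.Leads s (splitSESY X MY) := by
  refine ⟨⟨vsplitHom s.ι.f1 s.π.f1 s.mono.1 s.exact1,
           vsplitHom s.ι.f2 s.π.f2 s.mono.2.1 s.exact2,
           vsplitHom s.ι.f3 s.π.f3 s.mono.2.2 s.exact3, ?_, ?_⟩, ?_, ?_, ?_, ?_, ?_, ?_⟩
  · -- comm_a
    intro x
    by_cases hx : s.π.f3.f x = true
    · have h2 : s.π.f2.f (s.E.a.f x) = true := by
        rw [s.π.comm_a x, hx]; rfl
      show vsplit s.ι.f2 s.π.f2 s.exact2 (s.E.a.f x) = _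
      erw [vsplit_top s.ι.f2 s.π.f2 s.exact2 _ h2, vsplitHom_f, vsplit_top s.ι.f3 s.π.f3 s.exact3 x hx]
      exact Subtype.ext (Prod.ext_iff.mpr ⟨X.a.map_z.symm, rfl⟩)
    · have hx' : s.π.f3.f x = false := Bool.eq_false_iff.mpr hx
      obtain ⟨y, hy⟩ := (s.exact3 x).mp hx'
      subst hy
      have hcomm := s.ι.comm_a y
      show vsplit s.ι.f2 s.π.f2 s.exact2 (s.E.a.f (s.ι.f3.f y)) = _
      erw [← hcomm, vsplit_img s.ι.f2 s.π.f2 s.mono.2.1 s.exact2, vsplitHom_f,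
          vsplit_img s.ι.f3 s.π.f3 s.mono.2.2 s.exact3]
      exact Subtype.ext rfl
  · -- comm_b
    intro x
    by_cases hx : s.π.f1.f x = true
    · have h2 : s.π.f2.f (s.E.b.f x) = true := by
        rw [s.π.comm_b x, hx]; rfl
      show vsplit s.ι.f2 s.π.f2 s.exact2 (s.E.b.f x) = _
      erw [vsplit_top s.ι.f2 s.π.f2 s.exact2 _ h2, vsplitHom_f, vsplit_top s.ι.f1 s.π.f1 s.exact1 x hx]
      exact Subtype.ext (Prod.ext_iff.mpr ⟨X.b.map_z.symm, rfl⟩)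
    · have hx' : s.π.f1.f x = false := Bool.eq_false_iff.mpr hx
      obtain ⟨y, hy⟩ := (s.exact1 x).mp hx'
      subst hy
      have hcomm := s.ι.comm_b y
      show vsplit s.ι.f2 s.π.f2 s.exact2 (s.E.b.f (s.ι.f1.f y)) = _
      erw [← hcomm, vsplit_img s.ι.f2 s.π.f2 s.mono.2.1 s.exact2, vsplitHom_f,
          vsplit_img s.ι.f1 s.π.f1 s.mono.1 s.exact1]
      exact Subtype.ext rfl
  · intro x
    show vsplit s.ι.f1 s.π.f1 s.exact1 (s.ι.f1.f x) = _
    rw [vsplit_img s.ι.f1 s.π.f1 s.mono.1 s.exact1]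
    exact Subtype.ext rfl
  · intro x
    show vsplit s.ι.f2 s.π.f2 s.exact2 (s.ι.f2.f x) = _
    rw [vsplit_img s.ι.f2 s.π.f2 s.mono.2.1 s.exact2]
    exact Subtype.ext rfl
  · intro x
    show vsplit s.ι.f3 s.π.f3 s.exact3 (s.ι.f3.f x) = _
    rw [vsplit_img s.ι.f3 s.π.f3 s.mono.2.2 s.exact3]
    exact Subtype.ext rfl
  · intro x
    exact vsplit_snd s.ι.f1 s.π.f1 s.exact1 x
  · intro x
    exact vsplit_snd s.ι.f2 s.π.f2 s.exact2 x
  · intro x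
    exact vsplit_snd s.ι.f3 s.π.f3 s.exact3 x

/-! ### Auxiliary: the counterexample to projectivity -/

/-- The three-element `F1`-vector space. -/
def F1two : F1Mod := { carrier := Fin 3, z := 0 }

/-- The zero map `F1 → F1`. -/
def zeroHom : F1Hom F1one F1one :=
  ⟨fun _ => false, rfl, fun _ _ _ hn => absurd rfl hn⟩

def aA : Bool → Fin 3 := fun t => if t then 2 else 0
def bA : Bool → Fin 3 := fun t => if t then 1 else 0
def f2A : Fin 3 → Bool := fun n => decide (n = 1)

lemma aA_inj : ∀ a b : Bool, aA a = aA b → aA a ≠ (0 : Fin 3) → a = b := by decide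
lemma bA_inj : ∀ a b : Bool, bA a = bA b → bA a ≠ (0 : Fin 3) → a = b := by decide
lemma f2A_inj : ∀ a b : Fin 3, f2A a = f2A b → f2A a ≠ false → a = b := by decide
lemma f2A_surj : ∀ b : Bool, ∃ n : Fin 3, f2A n = b := by decide
lemma comm_aAB : ∀ x : Bool, f2A (aA x) = false := by decide
lemma comm_bAB : ∀ x : Bool, f2A (bA x) = x := by decide
lemma aA_ne_bA : ∀ c : Bool, aA true ≠ bA c := by decide

/-- The target representation `B`: `F1` everywhere, `a = 0`, `b = id`. -/
def RepB : RepY where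
  M1 := F1one
  M2 := F1one
  M3 := F1one
  a := zeroHom
  b := F1Hom.idH F1one

/-- The source representation `A`. -/
def RepA : RepY where
  M1 := F1one
  M2 := F1two
  M3 := F1one
  a := ⟨aA, rfl, aA_inj⟩
  b := ⟨bA, rfl, bA_inj⟩

/-- The epimorphism `A → B`. -/
def fAB : RepYHom RepA RepB where
  f1 := F1Hom.idH F1one
  f2 := ⟨f2A, rfl, f2A_inj⟩
  f3 := F1Hom.idH F1one
  comm_a := comm_aAB
  comm_b := comm_bAB

/-- The morphism `M → B` that does not lift through `fAB`. -/
def gMB : RepYHom MY RepB where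
  f1 := zeroHom
  f2 := zeroHom
  f3 := F1Hom.idH F1one
  comm_a := fun _ => rfl
  comm_b := fun _ => rfl

theorem MY_not_projective : ¬ MY.Projective := by
  intro hproj
  obtain ⟨h, h1, h2, h3⟩ := hproj RepA RepB fAB
    ⟨fun b => ⟨b, rfl⟩, f2A_surj, fun b => ⟨b, rfl⟩⟩ gMB
  have h3t : h.f3.f true = true := h3 true
  have ha : h.f2.f true = aA true := by
    have h' := h.comm_a true
    rw [h3t] at h'
    exact h'
  have hb : h.f2.f true = bA (h.f1.f true) := h.comm_b true
  exact aA_ne_bA (h.f1.f true) (ha.symm.trans hb)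

/-- For the quiver `3 → 2 ← 1`, the sincere indecomposable
representation `M` (with `F1` at all three vertices and identity maps)
satisfies `Ext¹(M, X) = 0` for all `X` — every short exact sequence
`X ↣ E ↠ M` is equivalent to the split one — yet `M` is not projective. -/
theorem ext1_vanishing_not_projective :
    (∀ (X : RepY) (s : SESY X MY),
        Relation.EqvGen (@SESY.Leads X MY) s (splitSESY X MY)) ∧
    ¬ MY.Projective :=
  ⟨fun X s => Relation.EqvGen.rel _ _ (sesy_splits X s), MY_not_projective⟩
end
end

section
/- For the quiver Q: 3 → 2 ← 1, every epimorphism f: X → M onto the sincere indecomposable M splits: X ≅ M ⊕ X' and f corresponds to the projection (1_M, 0). -/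
noncomputable section
open Function
attribute [local instance] Classical.propDecidable

/-! ### Auxiliary constructions for the splitting theorem -/

/-- Complement of a nonzero element in an `F1`-vector space. -/
def F1Mod.cmpl (V : F1Mod) (x : V.carrier) (hx : x ≠ V.z) : F1Mod where
  carrier := {v : V.carrier // v ≠ x}
  z := ⟨V.z, fun h => hx h.symm⟩

/-- An `F1`-linear map between complements. -/
def F1Hom.cmplHom {V W : F1Mod} (φ : F1Hom V W) (x : V.carrier) (y : W.carrier)
    (hxy : φ.f x = y) (hy : y ≠ W.z) (hx : x ≠ V.z) :
    F1Hom (V.cmpl x hx) (W.cmpl y hy) where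
  f v := ⟨φ.f v.val, fun h => v.2 (φ.inj _ _ (h.trans hxy.symm) (h ▸ hy))⟩
  map_z := Subtype.ext φ.map_z
  inj := fun a b hab hnz => Subtype.ext
    (φ.inj _ _ (congrArg Subtype.val hab) (fun h => hnz (Subtype.ext h)))

/-- The gluing map `F1one ⊕ (V ∖ x) → V`. -/
def F1Hom.glue {V : F1Mod} (x : V.carrier) (hx : x ≠ V.z) :
    F1Hom (F1one.sum (V.cmpl x hx)) V where
  f p := cond p.1.1 x p.1.2.val
  map_z := rfl
  inj := by
    rintro ⟨⟨a1, a2⟩, ha⟩ ⟨⟨b1, b2⟩, hb⟩ hab _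
    apply Subtype.ext
    cases a1 <;> cases b1 <;> simp only [cond] at hab
    · exact Prod.ext_iff.mpr ⟨rfl, Subtype.ext hab⟩
    · exact absurd hab a2.2
    · exact absurd hab.symm b2.2
    · have ha2 : a2 = (V.cmpl x hx).z :=
        ha.resolve_left (by intro h; exact Bool.noConfusion (h : true = false))
      have hb2 : b2 = (V.cmpl x hx).z :=
        hb.resolve_left (by intro h; exact Bool.noConfusion (h : true = false))
      exact Prod.ext_iff.mpr ⟨rfl, ha2.trans hb2.symm⟩

theorem F1Hom.glue_bij {V : F1Mod} (x : V.carrier) (hx : x ≠ V.z) :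
    Bijective (F1Hom.glue x hx).f := by
  constructor
  · intro a b hab
    by_cases hz : (F1Hom.glue x hx).f a = V.z
    · have hzb : (F1Hom.glue x hx).f b = V.z := hab ▸ hz
      have key : ∀ c, (F1Hom.glue x hx).f c = V.z →
          c = (F1one.sum (V.cmpl x hx)).z := by
        rintro ⟨⟨c1, c2⟩, hc⟩ hcz
        cases c1
        · exact Subtype.ext (Prod.ext_iff.mpr ⟨rfl, Subtype.ext hcz⟩)
        · exact absurd hcz hx
      exact (key a hz).trans (key b hzb).symm
    · exact (F1Hom.glue x hx).inj a b hab hz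
  · intro v
    by_cases hv : v = x
    · exact ⟨⟨(true, (V.cmpl x hx).z), Or.inr rfl⟩, hv.symm⟩
    · exact ⟨⟨(false, ⟨v, hv⟩), Or.inl rfl⟩, rfl⟩


def XcRep (X : RepY) (x1 : X.M1.carrier) (x3 : X.M3.carrier) (m2 : X.M2.carrier)
    (h1 : x1 ≠ X.M1.z) (h2 : m2 ≠ X.M2.z) (h3 : x3 ≠ X.M3.z)
    (hea : X.a.f x3 = m2) (heb : X.b.f x1 = m2) : RepY where
  M1 := X.M1.cmpl x1 h1
  M2 := X.M2.cmpl m2 h2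
  M3 := X.M3.cmpl x3 h3
  a := X.a.cmplHom x3 m2 hea h2 h3
  b := X.b.cmplHom x1 m2 heb h2 h1

def gRep (X : RepY) (x1 : X.M1.carrier) (x3 : X.M3.carrier) (m2 : X.M2.carrier)
    (h1 : x1 ≠ X.M1.z) (h2 : m2 ≠ X.M2.z) (h3 : x3 ≠ X.M3.z)
    (hea : X.a.f x3 = m2) (heb : X.b.f x1 = m2) :
    RepYHom (MY.sum (XcRep X x1 x3 m2 h1 h2 h3 hea heb)) X where
  f1 := F1Hom.glue x1 h1
  f2 := F1Hom.glue m2 h2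
  f3 := F1Hom.glue x3 h3
  comm_a := by
    rintro ⟨⟨p1, p2⟩, hp⟩
    cases p1
    · rfl
    · exact hea.symm
  comm_b := by
    rintro ⟨⟨p1, p2⟩, hp⟩
    cases p1
    · rfl
    · exact heb.symm

/-- For the quiver `3 → 2 ← 1`, every epimorphism
`f : X → M` onto the sincere indecomposable `M` splits: `X ≅ M ⊕ X'` and
under this isomorphism `f` corresponds to the projection `(1_M, 0)`. -/
theorem epi_onto_M_splits (X : RepY) (f : RepYHom X MY) (hf : f.Epi) :
    ∃ (X' : RepY) (g : RepYHom (MY.sum X') X),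
      g.IsIso ∧
      (∀ x, f.f1.f (g.f1.f x) = (RepY.pr1Y MY X').f1.f x) ∧
      (∀ x, f.f2.f (g.f2.f x) = (RepY.pr1Y MY X').f2.f x) ∧
      (∀ x, f.f3.f (g.f3.f x) = (RepY.pr1Y MY X').f3.f x) := by
  obtain ⟨x1, hx1⟩ := hf.1 true
  obtain ⟨x3, hx3⟩ := hf.2.2 true
  have h1 : x1 ≠ X.M1.z := by
    intro h
    rw [h, f.f1.map_z] at hx1
    exact Bool.noConfusion hx1
  have h3 : x3 ≠ X.M3.z := by
    intro h
    rw [h, f.f3.map_z] at hx3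
    exact Bool.noConfusion hx3
  have hm2 : f.f2.f (X.b.f x1) = true := (f.comm_b x1).trans hx1
  have ha3 : f.f2.f (X.a.f x3) = true := (f.comm_a x3).trans hx3
  have h2 : X.b.f x1 ≠ X.M2.z := by
    intro h
    rw [h, f.f2.map_z] at hm2
    exact Bool.noConfusion hm2
  have hea : X.a.f x3 = X.b.f x1 := by
    refine f.f2.inj _ _ (ha3.trans hm2.symm) ?_
    rw [ha3]
    exact fun h => Bool.noConfusion h
  refine ⟨XcRep X x1 x3 (X.b.f x1) h1 h2 h3 hea rfl,
    gRep X x1 x3 (X.b.f x1) h1 h2 h3 hea rfl,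
    ⟨F1Hom.glue_bij x1 h1, F1Hom.glue_bij (X.b.f x1) h2, F1Hom.glue_bij x3 h3⟩,
    ?_, ?_, ?_⟩
  · rintro ⟨⟨p1, p2⟩, hp⟩
    cases p1
    · show f.f1.f p2.val = false
      cases hq : f.f1.f p2.val with
      | false => rfl
      | true =>
        exact absurd (f.f1.inj _ _ (hq.trans hx1.symm)
          (by rw [hq]; exact fun h => Bool.noConfusion h)) p2.2
    · exact hx1
  · rintro ⟨⟨p1, p2⟩, hp⟩
    cases p1
    · show f.f2.f p2.val = false
      cases hq : f.f2.f p2.val with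
      | false => rfl
      | true =>
        exact absurd (f.f2.inj _ _ (hq.trans hm2.symm)
          (by rw [hq]; exact fun h => Bool.noConfusion h)) p2.2
    · exact hm2
  · rintro ⟨⟨p1, p2⟩, hp⟩
    cases p1
    · show f.f3.f p2.val = false
      cases hq : f.f3.f p2.val with
      | false => rfl
      | true =>
        exact absurd (f.f3.inj _ _ (hq.trans hx3.symm)
          (by rw [hq]; exact fun h => Bool.noConfusion h)) p2.2
    · exact hx3
end
end
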